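/- arXiv:1905.02087 — 6 statements merged into one kernel-verified Lean document; each statement's English description precedes it below -/
import Mathlib

section
/- Let a, β, c, ε, γ be positive real numbers and let W(λ) = (βε/c)(1 + aγ) + β(a + εγ)λ + (cβ − εγ/c)λ² − λ³. Then there exist a real number λ₁ > 0 and complex numbers λ₂, λ₃ with Re λ₂ < 0 and Re λ₃ < 0 such that W(λ) = −(λ − λ₁)(λ − λ₂)(λ − λ₃) for all λ ∈ ℂ. In particular the cubic W has exactly one root with positive real part (which is real) and two roots with negative real parts. -/
/-!
Write `W(λ) = d + bλ + eλ² - λ³` with `d = βε(1 + aγ)/c > 0` and `b = β(a + εγ) > 0`. The real cubic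
`x³ - e x² - b x - d` is negative at `0` and positive for large `x`, so it has a root `l₁ > 0`. Vieta's formulas leave a quadratic
factor whose roots have product `d / l₁ > 0` and sum `-(b + d / l₁) / l₁ < 0`; two complex numbers
with real negative sum and real positive product both have negative real part, since they are
either real of the same sign or complex conjugates.
-/

open Polynomial

theorem exists_pos_root_of_cubic (e b d : ℝ) (hd : 0 < d) :
    ∃ r : ℝ, 0 < r ∧ r ^ 3 - e * r ^ 2 - b * r - d = 0 := by
  set M := |e| + |b| + d + 1
  have hM : 1 ≤ M := by linarith [abs_nonneg e, abs_nonneg b]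
  have h_pos : 0 < M ^ 3 - e * M ^ 2 - b * M - d := by
    have h_lead : M ^ 2 * (|b| + d + 1) ≤ M ^ 2 * (M - e) := by
      gcongr; linarith [le_abs_self e]
    have h_sq : M ≤ M ^ 2 := by nlinarith
    have h_one : 1 ≤ M ^ 2 := by nlinarith
    nlinarith [mul_le_mul_of_nonneg_right (le_abs_self b) (by positivity : (0 : ℝ) ≤ M),
      mul_le_mul_of_nonneg_left h_sq (abs_nonneg b), mul_le_mul_of_nonneg_right h_one hd.le]
  obtain ⟨r, ⟨hr, -⟩, hroot⟩ := intermediate_value_Ioo (by linarith)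
    ((by fun_prop : Continuous fun x : ℝ => x ^ 3 - e * x ^ 2 - b * x - d).continuousOn)
    (show (0 : ℝ) ∈ Set.Ioo (0 ^ 3 - e * 0 ^ 2 - b * 0 - d) (M ^ 3 - e * M ^ 2 - b * M - d) by
      constructor <;> linarith)
  exact ⟨r, hr, hroot⟩

theorem exists_add_eq_and_mul_eq {k : Type*} [Field k] [IsAlgClosed k] (s q : k) :
    ∃ u v : k, u + v = s ∧ u * v = q := by
  obtain ⟨u, hu⟩ := IsAlgClosed.exists_root (C 1 * X ^ 2 + C (-s) * X + C q)
    (by rw [degree_quadratic one_ne_zero]; decide)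
  refine ⟨u, s - u, by ring, ?_⟩
  simp only [IsRoot, eval_add, eval_mul, eval_C, eval_pow, eval_X] at hu
  linear_combination -hu

theorem re_neg_of_add_eq_of_mul_eq {u v : ℂ} {s q : ℝ} (hsum : u + v = s) (hprod : u * v = q)
    (hs : s < 0) (hq : 0 < q) : u.re < 0 ∧ v.re < 0 := by
  have hre : u.re + v.re = s := by simpa using congrArg Complex.re hsum
  have him : u.im + v.im = 0 := by simpa using congrArg Complex.im hsum
  have hprod_re : u.re * v.re - u.im * v.im = q := by simpa using congrArg Complex.re hprod
  have hprod_im : u.re * v.im + u.im * v.re = 0 := by simpa using congrArg Complex.im hprod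
  rw [show v.im = -u.im by linarith] at hprod_re hprod_im
  rcases mul_eq_zero.mp (show u.im * (v.re - u.re) = 0 by linarith) with h_real | h_conj
  · rw [h_real] at hprod_re
    constructor <;> nlinarith
  · constructor <;> nlinarith

theorem cubic_eq_neg_prod_of_pos_root (e b d : ℝ) (hb : 0 ≤ b) (hd : 0 < d) :
    ∃ (l₁ : ℝ) (l₂ l₃ : ℂ), 0 < l₁ ∧ l₂.re < 0 ∧ l₃.re < 0 ∧
      ∀ lam : ℂ, (d : ℂ) + b * lam + e * lam ^ 2 - lam ^ 3
        = -((lam - l₁) * (lam - l₂) * (lam - l₃)) := by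
  obtain ⟨l₁, hl₁, hroot⟩ := exists_pos_root_of_cubic e b d hd
  set q := d / l₁
  have hq : 0 < q := by positivity
  have hq_mul : l₁ * q = d := mul_div_cancel₀ d hl₁.ne'
  have hs_mul : l₁ * (e - l₁) + q = -b := by
    apply mul_left_cancel₀ hl₁.ne'
    linear_combination -hroot + hq_mul
  have hs : e - l₁ < 0 := by nlinarith
  obtain ⟨l₂, l₃, hsum, hprod⟩ := exists_add_eq_and_mul_eq ((e - l₁ : ℝ) : ℂ) (q : ℂ)
  obtain ⟨h₂, h₃⟩ := re_neg_of_add_eq_of_mul_eq hsum hprod hs hq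
  refine ⟨l₁, l₂, l₃, hl₁, h₂, h₃, fun lam => ?_⟩
  push_cast at hsum
  have hq_mul' : (l₁ : ℂ) * q = d := by exact_mod_cast hq_mul
  have hs_mul' : (l₁ : ℂ) * (e - l₁) + q = -b := by exact_mod_cast hs_mul
  linear_combination (lam * l₁ - lam ^ 2) * hsum + (lam - l₁) * hprod - hq_mul'
    + lam * hs_mul'

theorem characteristic_cubic_root_structure
    (a β c ε γ : ℝ) (ha : 0 < a) (hβ : 0 < β) (hc : 0 < c)
    (hε : 0 < ε) (hγ : 0 < γ) :
    ∃ (l₁ : ℝ) (l₂ l₃ : ℂ), 0 < l₁ ∧ l₂.re < 0 ∧ l₃.re < 0 ∧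
      ∀ lam : ℂ,
        ((β * ε / c * (1 + a * γ) : ℝ) : ℂ)
            + ((β * (a + ε * γ) : ℝ) : ℂ) * lam
            + ((c * β - ε * γ / c : ℝ) : ℂ) * lam ^ 2 - lam ^ 3
          = -((lam - (l₁ : ℂ)) * (lam - l₂) * (lam - l₃)) :=
  cubic_eq_neg_prod_of_pos_root _ _ _ (by positivity) (by positivity)
end

section
/- Let 0 < a < 1/2, β > 0, and f(v) = v(v − a)(1 − v). Then the planar Hamiltonian system v' = u, u' = −β f(v) possesses a homoclinic solution to the origin: there exists a nonconstant differentiable solution (v, u): ℝ → ℝ², with v(ξ) > 0 for all ξ, satisfying v'(ξ) = u(ξ), u'(ξ) = −β f(v(ξ)), and (v(ξ), u(ξ)) → (0, 0) as ξ → +∞ and as ξ → −∞. -/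
open Filter Real Topology

/-!
The homoclinic orbit is explicit. For all `A B k`, the profile `v ξ = 1 / (A + B cosh (k ξ))`
solves `v'' = k² v (1 - 3 A v + 2 (A² - B²) v²)`, and this right-hand side is `-β f(v)` exactly
when `k² = a β`, `A = (1 + a) / (3 a)` and `A² - B² = 1 / (2 a)`. The last equation has a
solution `B > 0` because `A² - 1 / (2 a) = (2 - a) (1 - 2 a) / (18 a²)`, which is where `a < 1/2`
enters. Decay at `±∞` follows from `cosh → ∞` and `|v'| ≤ |k| v`.
-/

theorem Real.tendsto_cosh_atTop : Tendsto cosh atTop atTop :=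
  tendsto_atTop_mono (fun x => by rw [cosh_eq]; linarith [exp_pos (-x)])
    (tendsto_exp_atTop.atTop_div_const two_pos)

theorem Real.tendsto_cosh_cocompact : Tendsto cosh (cocompact ℝ) atTop := by
  have := tendsto_cosh_atTop.comp (tendsto_norm_cocompact_atTop (E := ℝ))
  refine this.congr fun x => ?_
  simp only [Function.comp, norm_eq_abs, cosh_abs]

noncomputable def invCoshProfile (A B k ξ : ℝ) : ℝ := (A + B * cosh (k * ξ))⁻¹

noncomputable def invCoshProfileDeriv (A B k ξ : ℝ) : ℝ :=
  -(B * k * sinh (k * ξ)) * invCoshProfile A B k ξ ^ 2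

section

variable {A B k : ℝ}

theorem hasDerivAt_invCoshProfile {ξ : ℝ} (h : A + B * cosh (k * ξ) ≠ 0) :
    HasDerivAt (invCoshProfile A B k) (invCoshProfileDeriv A B k ξ) ξ := by
  have := ((((hasDerivAt_id' ξ).const_mul k).cosh.const_mul B).const_add A).inv h
  refine this.congr_deriv ?_
  simp only [invCoshProfileDeriv, invCoshProfile]
  field_simp

theorem hasDerivAt_invCoshProfileDeriv {ξ : ℝ} (h : A + B * cosh (k * ξ) ≠ 0) :
    HasDerivAt (invCoshProfileDeriv A B k)
      (k ^ 2 * invCoshProfile A B k ξ * (1 - 3 * A * invCoshProfile A B k ξ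
        + 2 * (A ^ 2 - B ^ 2) * invCoshProfile A B k ξ ^ 2)) ξ := by
  have := ((((hasDerivAt_id' ξ).const_mul k).sinh.const_mul (B * k)).neg).mul
    ((hasDerivAt_invCoshProfile h).pow 2)
  refine this.congr_deriv ?_
  set v := invCoshProfile A B k ξ
  have hv : (A + B * cosh (k * ξ)) * v = 1 := mul_inv_cancel₀ h
  simp only [invCoshProfileDeriv, Pi.neg_apply, Pi.pow_apply]
  linear_combination (-k ^ 2 * v * (1 - 2 * (B * cosh (k * ξ) * v + 1 - A * v))) * hv
    + 2 * B ^ 2 * k ^ 2 * v ^ 3 * sinh_sq (k * ξ)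

theorem invCoshProfile_pos (hA : 0 ≤ A) (hB : 0 < B) (ξ : ℝ) : 0 < invCoshProfile A B k ξ :=
  inv_pos.2 (by positivity)

theorem tendsto_invCoshProfile_cocompact (hB : 0 < B) (hk : k ≠ 0) :
    Tendsto (invCoshProfile A B k) (cocompact ℝ) (𝓝 0) := by
  have hcosh := tendsto_cosh_cocompact.comp (tendsto_cocompact_mul_left₀ hk)
  exact (tendsto_atTop_add_const_left _ A (hcosh.const_mul_atTop hB)).inv_tendsto_atTop

theorem abs_invCoshProfileDeriv_le (hA : 0 ≤ A) (hB : 0 ≤ B) (ξ : ℝ) :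
    |invCoshProfileDeriv A B k ξ| ≤ |k| * invCoshProfile A B k ξ := by
  set v := invCoshProfile A B k ξ
  have hv : (A + B * cosh (k * ξ)) * v ^ 2 = v := by
    simp only [v, invCoshProfile]
    rcases eq_or_ne (A + B * cosh (k * ξ)) 0 with h | h
    · simp [h]
    · field_simp
  have hsinh : |sinh (k * ξ)| ≤ cosh (k * ξ) := by
    rw [abs_le]; constructor <;> nlinarith [cosh_sq (k * ξ), cosh_pos (k * ξ)]
  calc |invCoshProfileDeriv A B k ξ| = |k| * (B * |sinh (k * ξ)|) * v ^ 2 := by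
        simp only [invCoshProfileDeriv, abs_mul, abs_neg, abs_pow, abs_of_nonneg hB,
          sq_abs]; ring
    _ ≤ |k| * (A + B * cosh (k * ξ)) * v ^ 2 := by gcongr; nlinarith
    _ = |k| * v := by rw [mul_assoc, hv]

theorem tendsto_invCoshProfileDeriv_cocompact (hA : 0 ≤ A) (hB : 0 < B) (hk : k ≠ 0) :
    Tendsto (invCoshProfileDeriv A B k) (cocompact ℝ) (𝓝 0) := by
  have := (tendsto_invCoshProfile_cocompact (A := A) hB hk).const_mul |k|
  rw [mul_zero] at this
  exact squeeze_zero_norm (abs_invCoshProfileDeriv_le hA hB.le) this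

end

theorem exists_invCoshProfile_params {a β : ℝ} (ha0 : 0 < a) (ha1 : a < 1 / 2) (hβ : 0 < β) :
    ∃ A B k : ℝ, 0 ≤ A ∧ 0 < B ∧ 0 < k ∧ ∀ v : ℝ,
      k ^ 2 * v * (1 - 3 * A * v + 2 * (A ^ 2 - B ^ 2) * v ^ 2) = -β * (v * (v - a) * (1 - v)) := by
  set A := (1 + a) / (3 * a)
  have hdisc : A ^ 2 - 1 / (2 * a) = (2 - a) * (1 - 2 * a) / (18 * a ^ 2) := by
    simp only [A]; field_simp; ring
  have hdisc_pos : 0 < A ^ 2 - 1 / (2 * a) := by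
    rw [hdisc]; exact div_pos (mul_pos (by linarith) (by linarith)) (by positivity)
  refine ⟨A, √(A ^ 2 - 1 / (2 * a)), √(a * β), by positivity, sqrt_pos.2 hdisc_pos,
    sqrt_pos.2 (by positivity), fun v => ?_⟩
  rw [sq_sqrt hdisc_pos.le, sq_sqrt (by positivity)]
  simp only [A]
  field_simp
  ring

theorem existence_of_homoclinic_loop
    (a β : ℝ) (ha0 : 0 < a) (ha1 : a < 1 / 2) (hβ : 0 < β) :
    ∃ v u : ℝ → ℝ,
      (∃ ξ₁ ξ₂ : ℝ, v ξ₁ ≠ v ξ₂ ∨ u ξ₁ ≠ u ξ₂) ∧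
      (∀ ξ : ℝ, 0 < v ξ) ∧
      (∀ ξ : ℝ, HasDerivAt v (u ξ) ξ) ∧
      (∀ ξ : ℝ, HasDerivAt u (-β * (v ξ * (v ξ - a) * (1 - v ξ))) ξ) ∧
      Tendsto v atTop (nhds 0) ∧ Tendsto u atTop (nhds 0) ∧
      Tendsto v atBot (nhds 0) ∧ Tendsto u atBot (nhds 0) := by
  obtain ⟨A, B, k, hA, hB, hk, hode⟩ := exists_invCoshProfile_params ha0 ha1 hβ
  have hw : ∀ ξ, A + B * cosh (k * ξ) ≠ 0 := fun ξ => by positivity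
  have hv := tendsto_invCoshProfile_cocompact (A := A) hB hk.ne'
  have hu := tendsto_invCoshProfileDeriv_cocompact hA hB hk.ne'
  obtain ⟨ξ, hξ⟩ := ((hv.mono_left atTop_le_cocompact).eventually
    (gt_mem_nhds (invCoshProfile_pos hA hB 0))).exists
  refine ⟨invCoshProfile A B k, invCoshProfileDeriv A B k, ⟨ξ, 0, Or.inl hξ.ne⟩,
    invCoshProfile_pos hA hB, fun ξ => hasDerivAt_invCoshProfile (hw ξ),
    fun ξ => hode _ ▸ hasDerivAt_invCoshProfileDeriv (hw ξ),
    hv.mono_left atTop_le_cocompact, hu.mono_left atTop_le_cocompact,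
    hv.mono_left atBot_le_cocompact, hu.mono_left atBot_le_cocompact⟩
end

section
/- Let 0 < a < 1/2, τ > 0, and f(v) = v(v − a)(1 − v). There exists c₀ > 0 such that for every c with 0 < c < c₀ and τc² < 1, setting β = 1/(1 − τc²), the following holds: every maximal solution (v, u) of the planar system v' = u, u' = β(cu − f(v)) satisfying (v(ξ), u(ξ)) → (0, 0) as ξ → −∞ and u(ξ) > 0 for all sufficiently negative ξ has a first ξ* at which u(ξ*) = 0, and the corresponding intersection point with the horizontal axis satisfies a < v(ξ*) < 1 (and u > 0 on (−∞, ξ*)). -/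
open Filter

/-- The planar traveling-wave system (ε = 0, w = 0):
v' = u, u' = β(cu − f(v)), f(v) = v(v−a)(1−v), on the interval (−∞, ω). -/
def IsPlanarSol (a β c : ℝ) (v u : ℝ → ℝ) (ω : EReal) : Prop :=
  ∀ ξ : ℝ, (ξ : EReal) < ω →
    HasDerivAt v (u ξ) ξ ∧
    HasDerivAt u (β * (c * u ξ - v ξ * (v ξ - a) * (1 - v ξ))) ξ

/-- Maximality: any solution extending (v, u) beyond ω does not exist. -/
def IsPlanarMaximal (a β c : ℝ) (v u : ℝ → ℝ) (ω : EReal) : Prop :=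
  ∀ (v' u' : ℝ → ℝ) (ω' : EReal), IsPlanarSol a β c v' u' ω' →
    (∀ ξ : ℝ, (ξ : EReal) < ω → v' ξ = v ξ ∧ u' ξ = u ξ) → ω' ≤ ω

/-!
Along the separatrix the energy `E = u²/2 + β F(v)` (`planarEnergy`), where `F' = f` and
`F(0) = 0` (`cubicPotential`), grows from `0` at rate `E' = β c u²`. While `u ≥ 0` and
`0 ≤ v ≤ 1` we have `u ≤ √(2E + β)`, so `√(2E + β) - β c v` is nonincreasing; this caps `E` by
`3c + 2c²`, which for small `c` lies below `β F(1) ≥ (1 - 2a)/12`. Hence `v` cannot reach `1`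
while `u ≥ 0`, and at a first zero `ξ*` of `u` the identity `E(ξ*) = β F(v(ξ*)) > 0` forces
`v(ξ*) > a`.

Such a zero exists. If `u` stayed positive up to a finite end of the maximal interval, the
solution would stay bounded, have a limit there, and could be continued by the local existence
and uniqueness theorems. If `u` stayed positive forever, `(v, u)` would converge to an
equilibrium with `F(v) > 0`, that is to `(1, 0)`, whose energy is out of reach.
-/

open Set Topology

theorem Function.update_eventuallyEq_nhds {α β : Type*} [TopologicalSpace α] [T1Space α]
    [DecidableEq α] {f : α → β} {a a' : α} (h : a' ≠ a) (b : β) :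
    Function.update f a b =ᶠ[𝓝 a'] f :=
  (Function.update_eventuallyEq f a b).filter_mono
    (le_principal_iff.2 (isOpen_compl_singleton.mem_nhds h))

section Continuation

variable {E : Type*} [NormedAddCommGroup E] [NormedSpace ℝ E] {G : E → E} {f : ℝ → E}
  {B : ℝ} {x : E}

theorem hasDerivWithinAt_update_Iic_of_tendsto (hG : ContinuousAt G x)
    (hf : ∀ t < B, HasDerivAt f (G (f t)) t) (hfx : Tendsto f (𝓝[<] B) (𝓝 x)) :
    HasDerivWithinAt (Function.update f B x) (G x) (Iic B) B := by
  have hfu : ∀ t < B, HasDerivAt (Function.update f B x) (G (f t)) t := fun t ht =>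
    (hf t ht).congr_of_eventuallyEq (Function.update_eventuallyEq_nhds ht.ne x)
  refine hasDerivWithinAt_Iic_of_tendsto_deriv (s := Iio B)
    (fun t ht => (hfu t ht).differentiableAt.differentiableWithinAt) ?_ self_mem_nhdsWithin ?_
  · simpa [continuousWithinAt_update_same] using hfx
  · refine (hG.tendsto.comp hfx).congr' ?_
    filter_upwards [self_mem_nhdsWithin] with t ht using ((hfu t ht).deriv).symm

theorem eventuallyEq_nhdsLT_of_tendsto (hG : ContDiffAt ℝ 1 G x)
    (hf : ∀ t < B, HasDerivAt f (G (f t)) t) (hfx : Tendsto f (𝓝[<] B) (𝓝 x))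
    {h : ℝ → E} (hh : ∀ᶠ t in 𝓝 B, HasDerivAt h (G (h t)) t) (hhx : h B = x) :
    f =ᶠ[𝓝[<] B] h := by
  obtain ⟨K, U, hU, hK⟩ := hG.exists_lipschitzOnWith
  set F := Function.update f B x with hF_def
  have hFB : HasDerivWithinAt F (G x) (Iic B) B :=
    hasDerivWithinAt_update_Iic_of_tendsto hG.continuousAt hf hfx
  have hF : ∀ t < B, HasDerivAt F (G (F t)) t := fun t ht => by
    have hFf : F =ᶠ[𝓝 t] f := Function.update_eventuallyEq_nhds ht.ne x
    rw [hFf.eq_of_nhds]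
    exact (hf t ht).congr_of_eventuallyEq hFf
  have hFU : ∀ᶠ t in 𝓝[≤] B, F t ∈ U := by
    have hFx : F B = x := Function.update_self ..
    have := hFB.continuousWithinAt.tendsto
    rw [hFx] at this
    exact this.eventually_mem hU
  have hhU : ∀ᶠ t in 𝓝[≤] B, h t ∈ U ∧ HasDerivAt h (G (h t)) t := by
    have := hh.self_of_nhds.continuousAt.tendsto
    rw [hhx] at this
    exact nhdsWithin_le_nhds ((this.eventually_mem hU).and hh)
  obtain ⟨l, hlB, hl⟩ := mem_nhdsLE_iff_exists_Icc_subset.1 (hFU.and hhU)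
  have heq : EqOn F h (Icc l B) := by
    refine ODE_solution_unique_of_mem_Icc_left (v := fun _ => G) (s := fun _ => U)
      (fun _ _ => hK) (fun t ht => ?_) (fun t ht => ?_)
      (fun t ht => (hl (Ioc_subset_Icc_self ht)).1)
      (fun t ht => (hl ht).2.2.continuousAt.continuousWithinAt)
      (fun t ht => (hl (Ioc_subset_Icc_self ht)).2.2.hasDerivWithinAt)
      (fun t ht => (hl (Ioc_subset_Icc_self ht)).2.1) (by rw [hhx]; exact Function.update_self ..)
    · rcases ht.2.lt_or_eq with htB | rfl
      · exact (hF t htB).continuousAt.continuousWithinAt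
      · exact hFB.continuousWithinAt.mono Icc_subset_Iic_self
    · rcases ht.2.lt_or_eq with htB | rfl
      · exact (hF t htB).hasDerivWithinAt
      · simpa [F] using hFB
  filter_upwards [Ioo_mem_nhdsLT hlB] with t ht
  rw [← heq (Ioo_subset_Icc_self ht), hF_def, Function.update_of_ne ht.2.ne]

variable [CompleteSpace E]

theorem exists_extension_of_tendsto_nhdsLT (hG : ContDiffAt ℝ 1 G x)
    (hf : ∀ t < B, HasDerivAt f (G (f t)) t) (hfx : Tendsto f (𝓝[<] B) (𝓝 x)) :
    ∃ ε > 0, ∃ g : ℝ → E, (∀ t < B, g t = f t) ∧ ∀ t < B + ε, HasDerivAt g (G (g t)) t := by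
  obtain ⟨h, hhx, ε, hε, hh⟩ :=
    hG.exists_forall_mem_closedBall_exists_eq_forall_mem_Ioo_hasDerivAt₀ B
  have hhB : ∀ᶠ t in 𝓝 B, HasDerivAt h (G (h t)) t := by
    filter_upwards [Ioo_mem_nhds (sub_lt_self B hε) (lt_add_of_pos_right B hε)] using hh
  obtain ⟨l, hlB, hl⟩ := mem_nhdsLT_iff_exists_Ioo_subset.1
    (eventuallyEq_nhdsLT_of_tendsto hG hf hfx hhB hhx)
  set g : ℝ → E := fun t => if t < B then f t else h t
  refine ⟨ε, hε, g, fun t ht => if_pos ht, fun t ht => ?_⟩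
  rcases lt_or_ge t B with htB | htB
  · have hgf : g =ᶠ[𝓝 t] f := by
      filter_upwards [Iio_mem_nhds htB] with s hs using if_pos hs
    rw [hgf.eq_of_nhds]
    exact (hf t htB).congr_of_eventuallyEq hgf
  · have hgh : g =ᶠ[𝓝 t] h := by
      filter_upwards [Ioi_mem_nhds (hlB.trans_le htB)] with s hs
      by_cases hsB : s < B
      · exact (if_pos hsB).trans (hl ⟨hs, hsB⟩)
      · exact if_neg hsB
    rw [hgh.eq_of_nhds]
    exact (hh t ⟨by linarith, ht⟩).congr_of_eventuallyEq hgh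

end Continuation

section RealCalculus

variable {f f' : ℝ → ℝ} {b : ℝ}

theorem monotoneOn_Iic_of_hasDerivAt (hf : ∀ x ≤ b, HasDerivAt f (f' x) x)
    (hf' : ∀ x < b, 0 ≤ f' x) : MonotoneOn f (Iic b) :=
  monotoneOn_of_hasDerivWithinAt_nonneg (convex_Iic b)
    (fun x hx => (hf x hx).continuousAt.continuousWithinAt)
    (by rw [interior_Iic]; exact fun x hx => (hf x (le_of_lt hx)).hasDerivWithinAt)
    (by rw [interior_Iic]; exact hf')

theorem strictMonoOn_Iic_of_hasDerivAt (hf : ∀ x ≤ b, HasDerivAt f (f' x) x)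
    (hf' : ∀ x < b, 0 < f' x) : StrictMonoOn f (Iic b) :=
  strictMonoOn_of_hasDerivWithinAt_pos (convex_Iic b)
    (fun x hx => (hf x hx).continuousAt.continuousWithinAt)
    (by rw [interior_Iic]; exact fun x hx => (hf x (le_of_lt hx)).hasDerivWithinAt)
    (by rw [interior_Iic]; exact hf')

theorem MonotoneOn.le_of_tendsto_atBot {L : ℝ} (hf : MonotoneOn f (Iic b))
    (hL : Tendsto f atBot (𝓝 L)) : L ≤ f b :=
  le_of_tendsto hL (eventually_atBot.2 ⟨b, fun _ hx => hf hx self_mem_Iic hx⟩)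

theorem eq_zero_of_tendsto_of_tendsto_deriv {L M : ℝ} (hf : ∀ x, HasDerivAt f (f' x) x)
    (hL : Tendsto f atTop (𝓝 L)) (hM : Tendsto f' atTop (𝓝 M)) : M = 0 := by
  have hslope :
      ∀ n : ℕ, ∃ ζ ∈ Ioo (n : ℝ) (n + 1), f' ζ = (f (n + 1) - f n) / (n + 1 - n) :=
    fun n => exists_hasDerivAt_eq_slope f f' (by linarith)
      (fun x _ => (hf x).continuousAt.continuousWithinAt) (fun x _ => hf x)
  choose ζ hζ hζf using hslope
  have hζ_top : Tendsto ζ atTop atTop :=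
    tendsto_atTop_mono (fun n => (hζ n).1.le) tendsto_natCast_atTop_atTop
  have hdiff := (hL.comp (tendsto_atTop_add_const_right _ 1 tendsto_natCast_atTop_atTop)).sub
    (hL.comp tendsto_natCast_atTop_atTop)
  rw [sub_self] at hdiff
  refine tendsto_nhds_unique (hM.comp hζ_top) (hdiff.congr fun n => ?_)
  simp [hζf n]

theorem exists_tendsto_nhdsLT_of_abs_deriv_le {K : ℝ} (hf : ∀ x < b, HasDerivAt f (f' x) x)
    (hK : ∀ x < b, |f' x| ≤ K) : ∃ L, Tendsto f (𝓝[<] b) (𝓝 L) := by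
  have hlip : LipschitzOnWith K.toNNReal f (Iio b) :=
    (convex_Iio b).lipschitzOnWith_of_nnnorm_hasDerivWithin_le
      (fun x hx => (hf x hx).hasDerivWithinAt) fun x hx => by
        rw [← NNReal.coe_le_coe, coe_nnnorm, Real.norm_eq_abs, Real.coe_toNNReal']
        exact (hK x hx).trans (le_max_left _ _)
  obtain ⟨g, hg, hgf⟩ := hlip.extend_real
  refine ⟨g b, ((hg.continuous.tendsto b).mono_left nhdsWithin_le_nhds).congr' ?_⟩
  filter_upwards [self_mem_nhdsWithin] with x hx using (hgf hx).symm

theorem exists_first_zero {M z : ℝ} (hf : ContinuousOn f (Iic z)) (hM : ∀ x < M, 0 < f x)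
    (hz : f z ≤ 0) : ∃ x₀ ≤ z, f x₀ = 0 ∧ ∀ x < x₀, 0 < f x := by
  set S := Iic z ∩ f ⁻¹' Iic 0
  have hS : IsClosed S := hf.preimage_isClosed_of_isClosed isClosed_Iic isClosed_Iic
  have hS_bdd : BddBelow S := ⟨M, fun x hx => not_lt.1 fun h => (hM x h).not_ge hx.2⟩
  have hx₀ : sInf S ∈ S := hS.csInf_mem ⟨z, self_mem_Iic, hz⟩ hS_bdd
  have hpos : ∀ x < sInf S, 0 < f x := fun x hx =>
    lt_of_not_ge fun h => (csInf_le hS_bdd ⟨hx.le.trans hx₀.1, h⟩).not_gt hx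
  refine ⟨sInf S, hx₀.1, le_antisymm hx₀.2 ?_, hpos⟩
  have hleft := (hf _ hx₀.1).mono (Iio_subset_Iic_self.trans (Iic_subset_Iic.2 hx₀.1))
  exact ge_of_tendsto hleft.tendsto (eventually_nhdsWithin_of_forall fun x hx => (hpos x hx).le)

end RealCalculus

noncomputable section

def cubicPotential (a x : ℝ) : ℝ := -x ^ 4 / 4 + (1 + a) * x ^ 3 / 3 - a * x ^ 2 / 2

def planarEnergy (a β : ℝ) (v u : ℝ → ℝ) (ξ : ℝ) : ℝ :=
  u ξ ^ 2 / 2 + β * cubicPotential a (v ξ)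

def planarField (a β c : ℝ) (p : ℝ × ℝ) : ℝ × ℝ :=
  (p.2, β * (c * p.2 - p.1 * (p.1 - a) * (1 - p.1)))

end

section Potential

variable {a x : ℝ}

theorem hasDerivAt_cubicPotential (a x : ℝ) :
    HasDerivAt (cubicPotential a) (x * (x - a) * (1 - x)) x := by
  have h := ((((hasDerivAt_id x).pow 4).neg.div_const 4).add
    ((((hasDerivAt_id x).pow 3).const_mul (1 + a)).div_const 3)).sub
    ((((hasDerivAt_id x).pow 2).const_mul a).div_const 2)
  refine (h.congr_deriv ?_).congr_of_eventuallyEq (.of_forall fun y => ?_)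
  · simp only [id]; ring
  · simp only [cubicPotential, Pi.add_apply, Pi.sub_apply, Pi.neg_apply, Pi.pow_apply, id]

theorem continuous_cubicPotential (a : ℝ) : Continuous (cubicPotential a) := by
  unfold cubicPotential; fun_prop

@[simp]
theorem cubicPotential_zero (a : ℝ) : cubicPotential a 0 = 0 := by simp [cubicPotential]

theorem cubicPotential_one (a : ℝ) : cubicPotential a 1 = (1 - 2 * a) / 12 := by
  simp [cubicPotential]; ring

theorem neg_cubicPotential_le_half (ha0 : 0 ≤ a) (ha1 : a ≤ 1 / 2) (hx0 : 0 ≤ x) (hx1 : x ≤ 1) :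
    -cubicPotential a x ≤ 1 / 2 := by
  unfold cubicPotential
  nlinarith [pow_le_one₀ hx0 hx1 (n := 4), pow_le_one₀ hx0 hx1 (n := 2), pow_nonneg hx0 3]

theorem lt_of_cubicPotential_pos (ha : a ≤ 1 / 2) (hx : 0 ≤ x) (hF : 0 < cubicPotential a x) :
    a < x := by
  by_contra! hxa
  have hfactor : cubicPotential a x = x ^ 2 * (-3 * x ^ 2 + 4 * (1 + a) * x - 6 * a) / 12 := by
    unfold cubicPotential; ring
  have : -3 * x ^ 2 + 4 * (1 + a) * x - 6 * a ≤ 0 := by nlinarith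
  rw [hfactor] at hF
  nlinarith [sq_nonneg x]

theorem eq_one_of_cubic_eq_zero (ha : 0 < a) (hax : a < x) (h : x * (x - a) * (1 - x) = 0) :
    x = 1 := by
  rcases mul_eq_zero.1 h with h | h
  · rcases mul_eq_zero.1 h with h | h <;> linarith
  · linarith

theorem abs_cubic_le_one (ha0 : 0 ≤ a) (ha1 : a ≤ 1) (hx0 : 0 ≤ x) (hx1 : x ≤ 1) :
    |x * (x - a) * (1 - x)| ≤ 1 := by
  rw [abs_le]
  constructor <;> nlinarith [mul_nonneg hx0 (sub_nonneg.2 hx1)]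

end Potential

section PlanarSystem

variable {a β c : ℝ} {v u : ℝ → ℝ} {ω : EReal}

theorem contDiff_planarField : ContDiff ℝ 1 (planarField a β c) := by
  unfold planarField; fun_prop

theorem isPlanarSol_iff : IsPlanarSol a β c v u ω ↔ ∀ ξ : ℝ, (ξ : EReal) < ω →
    HasDerivAt (fun t => (v t, u t)) (planarField a β c (v ξ, u ξ)) ξ := by
  refine forall₂_congr fun ξ _ => ⟨fun ⟨hv, hu⟩ => hv.prodMk hu, fun h => ⟨?_, ?_⟩⟩
  · simpa [planarField] using h.hasFDerivAt.fst.hasDerivAt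
  · simpa [planarField] using h.hasFDerivAt.snd.hasDerivAt

theorem IsPlanarSol.of_le (hsol : IsPlanarSol a β c v u ω) {b ξ : ℝ} (hb : (b : EReal) < ω)
    (hξ : ξ ≤ b) :
    HasDerivAt v (u ξ) ξ ∧ HasDerivAt u (β * (c * u ξ - v ξ * (v ξ - a) * (1 - v ξ))) ξ :=
  hsol ξ ((EReal.coe_le_coe hξ).trans_lt hb)

theorem IsPlanarMaximal.false_of_tendsto {B p q : ℝ} (hmax : IsPlanarMaximal a β c v u B)
    (hsol : IsPlanarSol a β c v u B) (hv : Tendsto v (𝓝[<] B) (𝓝 p))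
    (hu : Tendsto u (𝓝[<] B) (𝓝 q)) : False := by
  obtain ⟨ε, hε, g, hgf, hg⟩ := exists_extension_of_tendsto_nhdsLT
    contDiff_planarField.contDiffAt (fun t ht => isPlanarSol_iff.1 hsol t (EReal.coe_lt_coe ht))
    (hv.prodMk_nhds hu)
  have hext : IsPlanarSol a β c (fun t => (g t).1) (fun t => (g t).2) (B + ε : ℝ) :=
    isPlanarSol_iff.2 fun t ht => hg t (EReal.coe_lt_coe_iff.1 ht)
  have hle := hmax _ _ _ hext fun t ht => Prod.ext_iff.1 (hgf t (EReal.coe_lt_coe_iff.1 ht))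
  exact (EReal.coe_le_coe_iff.1 hle).not_gt (lt_add_of_pos_right B hε)

theorem IsPlanarSol.equilibrium_of_tendsto (hsol : IsPlanarSol a β c v u ⊤) {p q : ℝ}
    (hv : Tendsto v atTop (𝓝 p)) (hu : Tendsto u atTop (𝓝 q)) :
    q = 0 ∧ β * (c * q - p * (p - a) * (1 - p)) = 0 := by
  have hd := fun ξ => hsol ξ (EReal.coe_lt_top ξ)
  refine ⟨eq_zero_of_tendsto_of_tendsto_deriv (fun ξ => (hd ξ).1) hv hu,
    eq_zero_of_tendsto_of_tendsto_deriv (fun ξ => (hd ξ).2) hu ?_⟩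
  exact ((hu.const_mul c).sub
    ((hv.mul (hv.sub_const a)).mul (tendsto_const_nhds.sub hv))).const_mul β

end PlanarSystem

structure SlowSpeed (a c β : ℝ) : Prop where
  a_pos : 0 < a
  a_lt_half : a < 1 / 2
  c_pos : 0 < c
  c_le : c ≤ (1 - 2 * a) / 100
  one_le_β : 1 ≤ β
  β_le_two : β ≤ 2

theorem slowSpeed_of_lt_min {a τ c : ℝ} (ha0 : 0 < a) (ha1 : a < 1 / 2) (hτ : 0 < τ)
    (hc0 : 0 < c) (hc : c < min ((1 - 2 * a) / 100) (1 / (τ + 1))) :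
    SlowSpeed a c (1 / (1 - τ * c ^ 2)) := by
  have hcτ : c * (τ + 1) < 1 := (lt_div_iff₀ (by linarith)).1 (hc.trans_le (min_le_right _ _))
  have hτc : τ * c ^ 2 < 1 / 4 := by nlinarith [sq_nonneg (τ - 1), mul_pos hτ hc0]
  refine ⟨ha0, ha1, hc0, (hc.trans_le (min_le_left _ _)).le, ?_, ?_⟩
  · rw [le_div_iff₀ (by linarith)]; nlinarith [mul_pos hτ (pow_pos hc0 2)]
  · rw [div_le_iff₀ (by linarith)]; linarith

theorem SlowSpeed.bound_lt_barrier {a c β : ℝ} (hR : SlowSpeed a c β) :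
    3 * c + 2 * c ^ 2 < β * cubicPotential a 1 := by
  obtain ⟨ha0, ha1, hc0, hc, hβ1, -⟩ := hR
  rw [cubicPotential_one]
  nlinarith

theorem SlowSpeed.le_of_sqrt_le {a c β E : ℝ} (hR : SlowSpeed a c β) (hE : 0 ≤ 2 * E + β)
    (h : √(2 * E + β) ≤ √β + β * c) : E ≤ 3 * c + 2 * c ^ 2 := by
  obtain ⟨-, -, hc0, -, hβ1, hβ2⟩ := hR
  have hβc : 0 ≤ β * c := by positivity
  have hsq : 2 * E + β ≤ β + 2 * √β * (β * c) + (β * c) ^ 2 := by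
    calc 2 * E + β = √(2 * E + β) ^ 2 := (Real.sq_sqrt hE).symm
      _ ≤ (√β + β * c) ^ 2 := pow_le_pow_left₀ (Real.sqrt_nonneg _) h 2
      _ = β + 2 * √β * (β * c) + (β * c) ^ 2 := by rw [add_sq, Real.sq_sqrt (by linarith)]
  have hsqrt : √β ≤ 3 / 2 := Real.sqrt_le_iff.2 ⟨by norm_num, by linarith⟩
  have hβc2 : β * c ≤ 2 * c := mul_le_mul_of_nonneg_right hβ2 hc0.le
  have h1 : √β * (β * c) ≤ 3 / 2 * (2 * c) := mul_le_mul hsqrt hβc2 hβc (by norm_num)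
  have h2 : (β * c) ^ 2 ≤ (2 * c) ^ 2 := pow_le_pow_left₀ hβc hβc2 2
  nlinarith

section Energy

variable {a β c : ℝ} {v u : ℝ → ℝ} {ω : EReal} {b : ℝ}

theorem hasDerivAt_planarEnergy {ξ : ℝ}
    (h : HasDerivAt v (u ξ) ξ ∧ HasDerivAt u (β * (c * u ξ - v ξ * (v ξ - a) * (1 - v ξ))) ξ) :
    HasDerivAt (planarEnergy a β v u) (β * c * u ξ ^ 2) ξ := by
  have := ((h.2.pow 2).div_const 2).add
    (((hasDerivAt_cubicPotential a (v ξ)).comp ξ h.1).const_mul β)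
  refine (this.congr_deriv ?_).congr_of_eventuallyEq (.of_forall fun y => rfl)
  simp only [Nat.cast_ofNat]; ring

theorem tendsto_planarEnergy_atBot (hv0 : Tendsto v atBot (𝓝 0))
    (hu0 : Tendsto u atBot (𝓝 0)) :
    Tendsto (planarEnergy a β v u) atBot (𝓝 0) := by
  show Tendsto (fun ξ => u ξ ^ 2 / 2 + β * cubicPotential a (v ξ)) atBot (𝓝 0)
  simpa using ((hu0.pow 2).div_const 2).add
    ((((continuous_cubicPotential a).tendsto 0).comp hv0).const_mul β)

theorem IsPlanarSol.energy_nonneg (hsol : IsPlanarSol a β c v u ω) (hb : (b : EReal) < ω)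
    (hβc : 0 ≤ β * c) (hv0 : Tendsto v atBot (𝓝 0)) (hu0 : Tendsto u atBot (𝓝 0)) :
    0 ≤ planarEnergy a β v u b :=
  (monotoneOn_Iic_of_hasDerivAt (fun ξ hξ => hasDerivAt_planarEnergy (hsol.of_le hb hξ))
    fun _ _ => by positivity).le_of_tendsto_atBot (tendsto_planarEnergy_atBot hv0 hu0)

theorem IsPlanarSol.energy_pos (hsol : IsPlanarSol a β c v u ω) (hb : (b : EReal) < ω)
    (hβc : 0 < β * c) (hv0 : Tendsto v atBot (𝓝 0)) (hu0 : Tendsto u atBot (𝓝 0))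
    (hu : ∀ ξ < b, 0 < u ξ) : 0 < planarEnergy a β v u b := by
  have hmono := strictMonoOn_Iic_of_hasDerivAt
    (fun ξ hξ => hasDerivAt_planarEnergy (hsol.of_le hb hξ)) fun ξ hξ => by
      have := hu ξ hξ; positivity
  have hb' : ((b - 1 : ℝ) : EReal) < ω := (EReal.coe_le_coe (by linarith)).trans_lt hb
  exact (hsol.energy_nonneg hb' hβc.le hv0 hu0).trans_lt
    (hmono (by simp : b - 1 ∈ Iic b) self_mem_Iic (by linarith))

theorem IsPlanarSol.v_nonneg (hsol : IsPlanarSol a β c v u ω) (hb : (b : EReal) < ω)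
    (hv0 : Tendsto v atBot (𝓝 0)) (hu : ∀ ξ ≤ b, 0 ≤ u ξ) : 0 ≤ v b :=
  (monotoneOn_Iic_of_hasDerivAt (fun _ hξ => (hsol.of_le hb hξ).1)
    fun _ hξ => hu _ hξ.le).le_of_tendsto_atBot hv0

theorem IsPlanarSol.energy_le (hR : SlowSpeed a c β) (hsol : IsPlanarSol a β c v u ω)
    (hb : (b : EReal) < ω) (hv0 : Tendsto v atBot (𝓝 0)) (hu0 : Tendsto u atBot (𝓝 0))
    (hu : ∀ ξ ≤ b, 0 ≤ u ξ) (hv1 : ∀ ξ ≤ b, v ξ ≤ 1) :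
    planarEnergy a β v u b ≤ 3 * c + 2 * c ^ 2 := by
  set E := planarEnergy a β v u
  set H : ℝ → ℝ := fun ξ => √(2 * E ξ + β)
  have hβc : 0 ≤ β * c := mul_nonneg (zero_le_one.trans hR.one_le_β) hR.c_pos.le
  have hdom : ∀ ξ ≤ b, (ξ : EReal) < ω := fun ξ hξ => (EReal.coe_le_coe hξ).trans_lt hb
  have hE0 : ∀ ξ ≤ b, 0 < 2 * E ξ + β := fun ξ hξ => by
    linarith [hsol.energy_nonneg (hdom ξ hξ) hβc hv0 hu0, hR.one_le_β]
  have hu_le_H : ∀ ξ ≤ b, u ξ ≤ H ξ := fun ξ hξ => by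
    have hF := neg_cubicPotential_le_half hR.a_pos.le hR.a_lt_half.le
      (hsol.v_nonneg (hdom ξ hξ) hv0 fun η hη => hu η (hη.trans hξ)) (hv1 ξ hξ)
    refine (le_abs_self _).trans (Real.abs_le_sqrt ?_)
    simp only [E, planarEnergy]
    nlinarith [mul_le_mul_of_nonneg_left hF (zero_le_one.trans hR.one_le_β)]
  have hderiv : ∀ ξ ≤ b, HasDerivAt (fun t => β * c * v t - H t)
      (β * c * u ξ - 2 * (β * c * u ξ ^ 2) / (2 * H ξ)) ξ := fun ξ hξ =>
    ((hsol.of_le hb hξ).1.const_mul (β * c)).sub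
      ((((hasDerivAt_planarEnergy (hsol.of_le hb hξ)).const_mul 2).add_const β).sqrt
        (hE0 ξ hξ).ne')
  have hmono : MonotoneOn (fun t => β * c * v t - H t) (Iic b) :=
    monotoneOn_Iic_of_hasDerivAt hderiv fun ξ hξ => by
      have hH : 0 < H ξ := Real.sqrt_pos.2 (hE0 ξ hξ.le)
      rw [sub_nonneg, div_le_iff₀ (by positivity)]
      nlinarith [mul_le_mul_of_nonneg_left (hu_le_H ξ hξ.le) (mul_nonneg hβc (hu ξ hξ.le))]
  have hlim : Tendsto (fun t => β * c * v t - H t) atBot (𝓝 (-√β)) := by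
    simpa using (hv0.const_mul (β * c)).sub
      ((((tendsto_planarEnergy_atBot hv0 hu0).const_mul 2).add_const β).sqrt)
  have hHb : H b ≤ √β + β * c := by
    have := hmono.le_of_tendsto_atBot hlim
    nlinarith [mul_le_mul_of_nonneg_left (hv1 b le_rfl) hβc]
  exact hR.le_of_sqrt_le (hE0 b le_rfl).le hHb

theorem IsPlanarSol.v_lt_one (hR : SlowSpeed a c β) (hsol : IsPlanarSol a β c v u ω)
    (hb : (b : EReal) < ω) (hv0 : Tendsto v atBot (𝓝 0)) (hu0 : Tendsto u atBot (𝓝 0))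
    (hu : ∀ ξ ≤ b, 0 ≤ u ξ) : v b < 1 := by
  by_contra! h1
  have hmono : MonotoneOn v (Iic b) :=
    monotoneOn_Iic_of_hasDerivAt (fun ξ hξ => (hsol.of_le hb hξ).1) fun ξ hξ => hu ξ hξ.le
  obtain ⟨ξ₀, hξ₀⟩ := eventually_atBot.1 (hv0.eventually (eventually_lt_nhds one_pos))
  obtain ⟨ξ₁, hξ₁, hv₁⟩ : ∃ ξ₁ ∈ Icc (min ξ₀ b) b, v ξ₁ = 1 :=
    intermediate_value_Icc (min_le_right _ _)
      (fun ξ hξ => (hsol.of_le hb hξ.2).1.continuousAt.continuousWithinAt)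
      ⟨(hξ₀ _ (min_le_left _ _)).le, h1⟩
  have hE := hsol.energy_le hR ((EReal.coe_le_coe hξ₁.2).trans_lt hb) hv0 hu0
    (fun ξ hξ => hu ξ (hξ.trans hξ₁.2)) fun ξ hξ => hv₁ ▸ hmono (hξ.trans hξ₁.2) hξ₁.2 hξ
  have hbarrier : β * cubicPotential a 1 ≤ planarEnergy a β v u ξ₁ := by
    rw [planarEnergy, hv₁]; nlinarith [sq_nonneg (u ξ₁)]
  linarith [hR.bound_lt_barrier]

theorem IsPlanarSol.u_le_two (hR : SlowSpeed a c β) (hsol : IsPlanarSol a β c v u ω)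
    (hb : (b : EReal) < ω) (hv0 : Tendsto v atBot (𝓝 0)) (hu0 : Tendsto u atBot (𝓝 0))
    (hu : ∀ ξ ≤ b, 0 ≤ u ξ) : u b ≤ 2 := by
  have hdom : ∀ ξ ≤ b, (ξ : EReal) < ω := fun ξ hξ => (EReal.coe_le_coe hξ).trans_lt hb
  have hv1 : ∀ ξ ≤ b, v ξ < 1 := fun ξ hξ =>
    hsol.v_lt_one hR (hdom ξ hξ) hv0 hu0 fun η hη => hu η (hη.trans hξ)
  have hE := hsol.energy_le hR hb hv0 hu0 hu fun ξ hξ => (hv1 ξ hξ).le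
  have hF := neg_cubicPotential_le_half hR.a_pos.le hR.a_lt_half.le
    (hsol.v_nonneg hb hv0 hu) (hv1 b le_rfl).le
  have hβF := mul_le_mul_of_nonneg_left hF (zero_le_one.trans hR.one_le_β)
  have hc := hR.c_le
  have hc2 : c ^ 2 ≤ 1 := by nlinarith [hR.c_pos, hR.a_pos]
  have hsq : u b ^ 2 ≤ 2 ^ 2 := by
    unfold planarEnergy at hE
    nlinarith [hR.a_pos, hR.β_le_two]
  exact (pow_le_pow_iff_left₀ (hu b le_rfl) zero_le_two two_ne_zero).1 hsq

end Energy

section Crossing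

variable {a β c : ℝ} {v u : ℝ → ℝ}

theorem IsPlanarSol.exists_tendsto_equilibrium (hR : SlowSpeed a c β)
    (hsol : IsPlanarSol a β c v u ⊤) (hv0 : Tendsto v atBot (𝓝 0)) (hu0 : Tendsto u atBot (𝓝 0))
    (hu : ∀ ξ, 0 < u ξ) :
    ∃ p, Tendsto v atTop (𝓝 p) ∧ Tendsto (planarEnergy a β v u) atTop (𝓝 (β * cubicPotential a p))
      ∧ p * (p - a) * (1 - p) = 0 := by
  set E := planarEnergy a β v u
  have hdom : ∀ ξ : ℝ, (ξ : EReal) < ⊤ := EReal.coe_lt_top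
  have hu' : ∀ ξ, ∀ η ≤ ξ, 0 ≤ u η := fun _ η _ => (hu η).le
  have hβc : 0 ≤ β * c := mul_nonneg (zero_le_one.trans hR.one_le_β) hR.c_pos.le
  have hv_le : ∀ ξ, v ξ ≤ 1 := fun ξ => (hsol.v_lt_one hR (hdom ξ) hv0 hu0 (hu' ξ)).le
  have hv_lim := tendsto_atTop_ciSup
    (monotone_of_hasDerivAt_nonneg (fun ξ => (hsol ξ (hdom ξ)).1) fun ξ => (hu ξ).le)
    ⟨1, by rintro _ ⟨ξ, rfl⟩; exact hv_le ξ⟩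
  have hE_lim := tendsto_atTop_ciSup
    (monotone_of_hasDerivAt_nonneg (fun ξ => hasDerivAt_planarEnergy (hsol ξ (hdom ξ)))
      fun ξ => by positivity)
    ⟨_, by rintro _ ⟨ξ, rfl⟩; exact hsol.energy_le hR (hdom ξ) hv0 hu0 (hu' ξ) fun η _ => hv_le η⟩
  set p := ⨆ ξ, v ξ
  set e := ⨆ ξ, E ξ
  have hu_sq : Tendsto (fun ξ => u ξ ^ 2) atTop (𝓝 (2 * e - 2 * β * cubicPotential a p)) :=
    ((hE_lim.const_mul 2).sub ((((continuous_cubicPotential a).tendsto p).comp hv_lim).const_mul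
      (2 * β))).congr fun ξ => by simp only [planarEnergy, Function.comp_apply]; ring
  have hu_lim : Tendsto u atTop (𝓝 √(2 * e - 2 * β * cubicPotential a p)) :=
    hu_sq.sqrt.congr fun ξ => Real.sqrt_sq (hu ξ).le
  obtain ⟨hq, hf⟩ := hsol.equilibrium_of_tendsto hv_lim hu_lim
  have he : e = β * cubicPotential a p := by
    have := ge_of_tendsto hu_sq (.of_forall fun ξ => sq_nonneg (u ξ))
    linarith [Real.sqrt_eq_zero'.1 hq]
  rw [hq, mul_zero, zero_sub] at hf
  exact ⟨p, hv_lim, he ▸ hE_lim,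
    neg_eq_zero.1 ((mul_eq_zero.1 hf).resolve_left (by linarith [hR.one_le_β]))⟩

theorem IsPlanarSol.not_forall_pos_of_top (hR : SlowSpeed a c β) (hsol : IsPlanarSol a β c v u ⊤)
    (hv0 : Tendsto v atBot (𝓝 0)) (hu0 : Tendsto u atBot (𝓝 0)) : ¬ ∀ ξ, 0 < u ξ := by
  intro hu
  obtain ⟨p, hv_lim, hE_lim, hf⟩ := hsol.exists_tendsto_equilibrium hR hv0 hu0 hu
  have hdom : ∀ ξ : ℝ, (ξ : EReal) < ⊤ := EReal.coe_lt_top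
  have hu' : ∀ ξ, ∀ η ≤ ξ, 0 ≤ u η := fun _ η _ => (hu η).le
  have hβ : 0 < β := zero_lt_one.trans_le hR.one_le_β
  have hE_mono : Monotone (planarEnergy a β v u) := monotone_of_hasDerivAt_nonneg
    (fun ξ => hasDerivAt_planarEnergy (hsol ξ (hdom ξ))) fun ξ => by
      have := hR.c_pos; positivity
  have hp_pos : 0 < cubicPotential a p := pos_of_mul_pos_right
    ((hsol.energy_pos (hdom 0) (mul_pos hβ hR.c_pos) hv0 hu0 fun ξ _ => hu ξ).trans_le
      (hE_mono.ge_of_tendsto hE_lim 0)) hβ.le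
  have hp0 : 0 ≤ p :=
    ge_of_tendsto hv_lim (.of_forall fun ξ => hsol.v_nonneg (hdom ξ) hv0 (hu' ξ))
  have hp : p = 1 := eq_one_of_cubic_eq_zero hR.a_pos
    (lt_of_cubicPotential_pos hR.a_lt_half.le hp0 hp_pos) hf
  have hE_le : β * cubicPotential a p ≤ 3 * c + 2 * c ^ 2 :=
    le_of_tendsto hE_lim (.of_forall fun ξ => hsol.energy_le hR (hdom ξ) hv0 hu0 (hu' ξ)
      fun η _ => (hsol.v_lt_one hR (hdom η) hv0 hu0 (hu' η)).le)
  rw [hp] at hE_le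
  exact hE_le.not_gt hR.bound_lt_barrier

theorem IsPlanarSol.not_forall_pos_of_maximal (hR : SlowSpeed a c β) {B : ℝ}
    (hsol : IsPlanarSol a β c v u B) (hmax : IsPlanarMaximal a β c v u B)
    (hv0 : Tendsto v atBot (𝓝 0)) (hu0 : Tendsto u atBot (𝓝 0)) : ¬ ∀ ξ < B, 0 < u ξ := by
  intro hu
  have hdom : ∀ {ξ : ℝ}, ξ < B → (ξ : EReal) < B := EReal.coe_lt_coe
  have hu' : ∀ {ξ : ℝ}, ξ < B → ∀ η ≤ ξ, 0 ≤ u η := fun hξ η hη => (hu η (hη.trans_lt hξ)).le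
  have hu_le : ∀ ξ < B, u ξ ≤ 2 := fun ξ hξ => hsol.u_le_two hR (hdom hξ) hv0 hu0 (hu' hξ)
  obtain ⟨p, hp⟩ := exists_tendsto_nhdsLT_of_abs_deriv_le (K := 2)
    (fun ξ hξ => (hsol ξ (hdom hξ)).1) fun ξ hξ => abs_le.2 ⟨by linarith [hu ξ hξ], hu_le ξ hξ⟩
  obtain ⟨q, hq⟩ := exists_tendsto_nhdsLT_of_abs_deriv_le (K := 4)
    (fun ξ hξ => (hsol ξ (hdom hξ)).2) fun ξ hξ => by
      have hf := abs_le.1 (abs_cubic_le_one hR.a_pos.le (by linarith [hR.a_lt_half])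
        (hsol.v_nonneg (hdom hξ) hv0 (hu' hξ)) (hsol.v_lt_one hR (hdom hξ) hv0 hu0 (hu' hξ)).le)
      have hcu : c * u ξ ≤ 1 := by nlinarith [hu_le ξ hξ, hR.c_le, hR.a_pos, hR.c_pos]
      have hcu0 : 0 ≤ c * u ξ := mul_nonneg hR.c_pos.le (hu ξ hξ).le
      rw [abs_le]
      constructor <;> nlinarith [hR.one_le_β, hR.β_le_two]
  exact hmax.false_of_tendsto hsol hp hq

theorem IsPlanarSol.mem_Ioo_of_first_zero (hR : SlowSpeed a c β) {ω : EReal} {b : ℝ}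
    (hsol : IsPlanarSol a β c v u ω) (hb : (b : EReal) < ω) (hv0 : Tendsto v atBot (𝓝 0))
    (hu0 : Tendsto u atBot (𝓝 0)) (hu : ∀ ξ < b, 0 < u ξ) (hzero : u b = 0) :
    a < v b ∧ v b < 1 := by
  have hu' : ∀ ξ ≤ b, 0 ≤ u ξ := fun ξ hξ =>
    hξ.lt_or_eq.elim (fun h => (hu ξ h).le) (· ▸ hzero.ge)
  have hβc : 0 < β * c := mul_pos (zero_lt_one.trans_le hR.one_le_β) hR.c_pos
  have hE := hsol.energy_pos hb hβc hv0 hu0 hu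
  rw [planarEnergy, hzero, zero_pow two_ne_zero, zero_div, zero_add] at hE
  exact ⟨lt_of_cubicPotential_pos hR.a_lt_half.le (hsol.v_nonneg hb hv0 hu')
    (pos_of_mul_pos_right hE (zero_le_one.trans hR.one_le_β)),
    hsol.v_lt_one hR hb hv0 hu0 hu'⟩

end Crossing

theorem separatrix_first_axis_crossing
    (a τ : ℝ) (ha0 : 0 < a) (ha1 : a < 1 / 2) (hτ : 0 < τ) :
    ∃ c₀ > (0 : ℝ), ∀ c : ℝ, 0 < c → c < c₀ → τ * c ^ 2 < 1 →
      ∀ β : ℝ, β = 1 / (1 - τ * c ^ 2) →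
      ∀ (v u : ℝ → ℝ) (ω : EReal), 0 < ω →
        IsPlanarSol a β c v u ω →
        IsPlanarMaximal a β c v u ω →
        Tendsto v atBot (nhds 0) → Tendsto u atBot (nhds 0) →
        (∃ M : ℝ, ∀ ξ : ℝ, ξ < M → 0 < u ξ) →
        ∃ ξs : ℝ, (ξs : EReal) < ω ∧ u ξs = 0 ∧
          a < v ξs ∧ v ξs < 1 ∧ ∀ ξ : ℝ, ξ < ξs → 0 < u ξ := by
  refine ⟨min ((1 - 2 * a) / 100) (1 / (τ + 1)), lt_min (by linarith) (by positivity), ?_⟩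
  intro c hc0 hc _ β hβ v u ω hω hsol hmax hv0 hu0 ⟨M, hM⟩
  have hR : SlowSpeed a c β := hβ ▸ slowSpeed_of_lt_min ha0 ha1 hτ hc0 hc
  by_cases hZ : ∃ z : ℝ, (z : EReal) < ω ∧ u z ≤ 0
  · obtain ⟨z, hz, huz⟩ := hZ
    obtain ⟨ξs, hξs, hzero, hpos⟩ := exists_first_zero
      (fun ξ hξ => (hsol.of_le hz hξ).2.continuousAt.continuousWithinAt) hM huz
    have hξsω : (ξs : EReal) < ω := (EReal.coe_le_coe hξs).trans_lt hz
    obtain ⟨hav, hv1⟩ := hsol.mem_Ioo_of_first_zero hR hξsω hv0 hu0 hpos hzero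
    exact ⟨ξs, hξsω, hzero, hav, hv1, hpos⟩
  push Not at hZ
  exfalso
  induction ω using EReal.rec with
  | bot => exact not_lt_bot hω
  | coe B =>
    exact hsol.not_forall_pos_of_maximal hR hmax hv0 hu0 fun ξ hξ =>
      hZ ξ (EReal.coe_lt_coe hξ)
  | top => exact hsol.not_forall_pos_of_top hR hv0 hu0 fun ξ => hZ ξ (EReal.coe_lt_top ξ)
end

section
/- Let 0 < a < 1, τ, γ, ε > 0, 0 < c < 1/√τ, β = 1/(1 − τc²), δ = ε/c, and f(v) = v(v − a)(1 − v). Define E⁺ = {(v, u, w) ∈ ℝ³ : u > 0, v > 1, δ(v − γw) > 0, β(cu − f(v) + w) > 0} and E⁻ = {(v, u, w) ∈ ℝ³ : v < 0, u < 0, δ(v − γw) < 0, β(cu − f(v) + w) < 0}. Then E⁺ and E⁻ are positively invariant for the system v' = u, u' = β(cu − f(v) + w), w' = δ(v − γw): if a solution q is defined on [0, T) and q(0) ∈ E⁺ (respectively q(0) ∈ E⁻), then q(ξ) ∈ E⁺ (respectively q(ξ) ∈ E⁻) for all ξ ∈ [0, T). -/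
open Set

/-!
A first-exit argument. On `E⁺` both `v' = u` and `u' = β(cu - f(v) + w)` are positive, so `u` and
`v` only grow and cannot be the first coordinates to leave. If `A = v - γw` reaches `0` first, then
`A' = u - γδA = u > 0` there, impossible for a positive function reaching zero; if
`B = cu - f(v) + w` does, then `B' = cβB - f'(v)u + δA = -f'(v)u + δA > 0` because `f` decreases
beyond `1`. Reflecting `(v, u, w) ↦ (-v, -u, -w)` turns the system with nonlinearity `f` into the
one with `x ↦ -f(-x)`, and `E⁻` into an `E⁺`-type region with threshold `0`, beyond which the
reflected cubic decreases.
-/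

theorem exists_first_zero_of_continuousOn {G : ℝ → ℝ} {a T : ℝ} (hG : ContinuousOn G (Ico a T))
    (ha : 0 < G a) (hneg : ∃ t ∈ Ico a T, G t ≤ 0) :
    ∃ t₀ ∈ Ioo a T, G t₀ = 0 ∧ ∀ t ∈ Ico a t₀, 0 < G t := by
  obtain ⟨t₁, ht₁, hGt₁⟩ := hneg
  set K := Icc a t₁ ∩ G ⁻¹' Iic 0
  have hKsub : Icc a t₁ ⊆ Ico a T := Icc_subset_Ico_right ht₁.2
  have hK : IsClosed K := (hG.mono hKsub).preimage_isClosed_of_isClosed isClosed_Icc isClosed_Iic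
  have hKbdd : BddBelow K := ⟨a, fun t ht => ht.1.1⟩
  obtain ⟨⟨hat₀, ht₀t₁⟩, hGt₀⟩ := hK.csInf_mem ⟨t₁, ⟨ht₁.1, le_rfl⟩, hGt₁⟩ hKbdd
  set t₀ := sInf K
  have hbefore : ∀ t ∈ Ico a t₀, 0 < G t := fun t ht => by
    by_contra! h
    exact (csInf_le hKbdd ⟨⟨ht.1, ht.2.le.trans ht₀t₁⟩, h⟩).not_gt ht.2
  have hat : a < t₀ := hat₀.lt_of_ne fun h => (h ▸ hGt₀).not_gt ha
  refine ⟨t₀, ⟨hat, ht₀t₁.trans_lt ht₁.2⟩, hGt₀.antisymm ?_, hbefore⟩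
  have hcl : t₀ ∈ closure (Ico a t₀) := by
    rw [closure_Ico hat.ne]
    exact right_mem_Icc.2 hat.le
  exact ContinuousWithinAt.closure_le hcl continuousWithinAt_const
    ((hG t₀ (hKsub ⟨hat₀, ht₀t₁⟩)).mono (Ico_subset_Ico_right (ht₀t₁.trans ht₁.2.le)))
    fun t ht => (hbefore t ht).le

theorem HasDerivWithinAt.nonpos_of_le_left {F : ℝ → ℝ} {d a t : ℝ} (hat : a < t)
    (hd : HasDerivWithinAt F d (Ico a t) t) (hF : ∀ x ∈ Ico a t, F t ≤ F x) : d ≤ 0 := by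
  rw [hasDerivWithinAt_iff_tendsto_slope, sdiff_singleton_eq_self right_notMem_Ico] at hd
  have := right_nhdsWithin_Ico_neBot hat
  refine le_of_tendsto hd (eventually_nhdsWithin_of_forall fun x hx => ?_)
  rw [slope_def_field]
  exact div_nonpos_of_nonneg_of_nonpos (sub_nonneg.2 (hF x hx)) (sub_nonpos.2 hx.2.le)

theorem monotoneOn_Icc_of_hasDerivWithinAt_Ico {F F' : ℝ → ℝ} {a t T : ℝ} (htT : t < T)
    (hF : ∀ x ∈ Ico a T, HasDerivWithinAt F (F' x) (Ico a T) x)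
    (hF' : ∀ x ∈ Ioo a t, 0 ≤ F' x) : MonotoneOn F (Icc a t) := by
  have hsub : Icc a t ⊆ Ico a T := Icc_subset_Ico_right htT
  refine monotoneOn_of_hasDerivWithinAt_nonneg (f' := F') (convex_Icc a t)
    (fun x hx => (hF x (hsub hx)).continuousWithinAt.mono hsub) (fun x hx => ?_) ?_
  · rw [interior_Icc] at hx ⊢
    exact (hF x (hsub (Ioo_subset_Icc_self hx))).mono (Ioo_subset_Icc_self.trans hsub)
  · rwa [interior_Icc]

def IsTravelingWaveSolutionOn (f : ℝ → ℝ) (c β δ γ T : ℝ) (v u w : ℝ → ℝ) : Prop :=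
  ∀ ξ ∈ Ico (0 : ℝ) T,
    HasDerivWithinAt v (u ξ) (Ico 0 T) ξ ∧
    HasDerivWithinAt u (β * (c * u ξ - f (v ξ) + w ξ)) (Ico 0 T) ξ ∧
    HasDerivWithinAt w (δ * (v ξ - γ * w ξ)) (Ico 0 T) ξ

/-- `E⁺` with the threshold `θ` in place of `1` and without the positive factors `δ` of `w'` and
`β` of `u'`. -/
def InUpperRegion (f : ℝ → ℝ) (θ c γ v u w : ℝ) : Prop :=
  0 < u ∧ θ < v ∧ 0 < v - γ * w ∧ 0 < c * u - f v + w

/-- `E⁻` with the threshold `θ` in place of `0`, likewise without `δ` and `β`. -/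
def InLowerRegion (f : ℝ → ℝ) (θ c γ v u w : ℝ) : Prop :=
  u < 0 ∧ v < θ ∧ v - γ * w < 0 ∧ c * u - f v + w < 0

theorem inUpperRegion_neg_iff {f : ℝ → ℝ} {θ c γ v u w : ℝ} :
    InUpperRegion (fun x => -f (-x)) (-θ) c γ (-v) (-u) (-w) ↔ InLowerRegion f θ c γ v u w := by
  simp only [InUpperRegion, InLowerRegion, neg_neg]
  constructor <;> rintro ⟨h₁, h₂, h₃, h₄⟩ <;>
    exact ⟨by linarith, by linarith, by linarith, by linarith⟩

section TrappingRegions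

variable {f f' : ℝ → ℝ} {θ c β δ γ T : ℝ} {v u w : ℝ → ℝ}

theorem IsTravelingWaveSolutionOn.neg (h : IsTravelingWaveSolutionOn f c β δ γ T v u w) :
    IsTravelingWaveSolutionOn (fun x => -f (-x)) c β δ γ T (-v) (-u) (-w) := by
  intro ξ hξ
  obtain ⟨hv, hu, hw⟩ := h ξ hξ
  refine ⟨hv.neg, ?_, ?_⟩
  · exact hu.neg.congr_deriv (by simp only [Pi.neg_apply, neg_neg]; ring)
  · exact hw.neg.congr_deriv (by simp only [Pi.neg_apply]; ring)

theorem IsTravelingWaveSolutionOn.inUpperRegion_of_forall_Ico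
    (hsol : IsTravelingWaveSolutionOn f c β δ γ T v u w) (hβ : 0 ≤ β) (hδ : 0 < δ)
    (hf : ∀ x, HasDerivAt f (f' x) x) (hf' : ∀ x, θ < x → f' x ≤ 0)
    {t₀ : ℝ} (ht₀ : t₀ ∈ Ioo 0 T)
    (hbefore : ∀ t ∈ Ico 0 t₀, InUpperRegion f θ c γ (v t) (u t) (w t))
    (hA : 0 ≤ v t₀ - γ * w t₀) (hB : 0 ≤ c * u t₀ - f (v t₀) + w t₀) :
    InUpperRegion f θ c γ (v t₀) (u t₀) (w t₀) := by
  obtain ⟨h0, hT⟩ := ht₀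
  have hI : Ico 0 t₀ ⊆ Ico 0 T := Ico_subset_Ico_right hT.le
  obtain ⟨hvd, hud, hwd⟩ := hsol t₀ ⟨h0.le, hT⟩
  have hu : 0 < u t₀ := (hbefore 0 ⟨le_rfl, h0⟩).1.trans_le <|
    monotoneOn_Icc_of_hasDerivWithinAt_Ico hT (fun x hx => (hsol x hx).2.1)
      (fun x hx => mul_nonneg hβ (hbefore x ⟨hx.1.le, hx.2⟩).2.2.2.le)
      (left_mem_Icc.2 h0.le) (right_mem_Icc.2 h0.le) h0.le
  have hv : θ < v t₀ := (hbefore 0 ⟨le_rfl, h0⟩).2.1.trans_le <|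
    monotoneOn_Icc_of_hasDerivWithinAt_Ico hT (fun x hx => (hsol x hx).1)
      (fun x hx => (hbefore x ⟨hx.1.le, hx.2⟩).1.le)
      (left_mem_Icc.2 h0.le) (right_mem_Icc.2 h0.le) h0.le
  have hA' : 0 < v t₀ - γ * w t₀ := by
    refine hA.lt_of_ne' fun hA0 => hu.not_ge ?_
    have := ((hvd.sub (hwd.const_mul γ)).mono hI).nonpos_of_le_left h0
      fun x hx => hA0.le.trans (hbefore x hx).2.2.1.le
    simpa [hA0] using this
  refine ⟨hu, hv, hA', hB.lt_of_ne' fun hB0 => ?_⟩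
  have := ((((hud.const_mul c).sub ((hf (v t₀)).comp_hasDerivWithinAt t₀ hvd)).add hwd).mono
    hI).nonpos_of_le_left h0 fun x hx => hB0.le.trans (hbefore x hx).2.2.2.le
  rw [hB0, mul_zero, mul_zero, zero_sub] at this
  nlinarith [mul_nonpos_of_nonpos_of_nonneg (hf' _ hv) hu.le, mul_pos hδ hA']

theorem IsTravelingWaveSolutionOn.inUpperRegion
    (hsol : IsTravelingWaveSolutionOn f c β δ γ T v u w) (hβ : 0 ≤ β) (hδ : 0 < δ)
    (hf : ∀ x, HasDerivAt f (f' x) x) (hf' : ∀ x, θ < x → f' x ≤ 0)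
    (h0 : InUpperRegion f θ c γ (v 0) (u 0) (w 0)) :
    ∀ t ∈ Ico 0 T, InUpperRegion f θ c γ (v t) (u t) (w t) := by
  by_contra! hexit
  let G t := min (u t) (min (v t - θ) (min (v t - γ * w t) (c * u t - f (v t) + w t)))
  have hG : ∀ t, 0 < G t ↔ InUpperRegion f θ c γ (v t) (u t) (w t) := fun t => by
    simp only [G, InUpperRegion, lt_min_iff, sub_pos]
  have hGcont : ContinuousOn G (Ico 0 T) := by
    have hvc : ContinuousOn v (Ico 0 T) := fun t ht => (hsol t ht).1.continuousWithinAt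
    have huc : ContinuousOn u (Ico 0 T) := fun t ht => (hsol t ht).2.1.continuousWithinAt
    have hwc : ContinuousOn w (Ico 0 T) := fun t ht => (hsol t ht).2.2.continuousWithinAt
    have hfc : Continuous f := continuous_iff_continuousAt.2 fun x => (hf x).continuousAt
    fun_prop
  obtain ⟨t₀, ht₀, hGt₀, hbefore⟩ := exists_first_zero_of_continuousOn hGcont ((hG 0).2 h0)
    (hexit.imp fun t ⟨ht, hout⟩ => ⟨ht, not_lt.1 (mt (hG t).1 hout)⟩)
  have hA : 0 ≤ v t₀ - γ * w t₀ :=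
    hGt₀.symm.le.trans ((min_le_right _ _).trans ((min_le_right _ _).trans (min_le_left _ _)))
  have hB : 0 ≤ c * u t₀ - f (v t₀) + w t₀ :=
    hGt₀.symm.le.trans ((min_le_right _ _).trans ((min_le_right _ _).trans (min_le_right _ _)))
  exact ((hG t₀).2 (hsol.inUpperRegion_of_forall_Ico hβ hδ hf hf' ht₀
    (fun t ht => (hG t).1 (hbefore t ht)) hA hB)).ne' hGt₀

theorem IsTravelingWaveSolutionOn.inLowerRegion
    (hsol : IsTravelingWaveSolutionOn f c β δ γ T v u w) (hβ : 0 ≤ β) (hδ : 0 < δ)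
    (hf : ∀ x, HasDerivAt f (f' x) x) (hf' : ∀ x, x < θ → f' x ≤ 0)
    (h0 : InLowerRegion f θ c γ (v 0) (u 0) (w 0)) :
    ∀ t ∈ Ico 0 T, InLowerRegion f θ c γ (v t) (u t) (w t) := by
  have hfneg : ∀ x, HasDerivAt (fun x => -f (-x)) (f' (-x)) x := fun x =>
    ((hf (-x)).comp x (hasDerivAt_neg x)).neg.congr_deriv (by ring)
  intro t ht
  exact inUpperRegion_neg_iff.1 <| hsol.neg.inUpperRegion hβ hδ hfneg
    (fun x hx => hf' _ (by linarith)) (inUpperRegion_neg_iff.2 h0) t ht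

end TrappingRegions

theorem hasDerivAt_cubic (a x : ℝ) :
    HasDerivAt (fun x => x * (x - a) * (1 - x)) (-3 * x ^ 2 + 2 * (1 + a) * x - a) x := by
  have := ((hasDerivAt_id' x).mul ((hasDerivAt_id' x).sub_const a)).mul
    ((hasDerivAt_const x (1 : ℝ)).sub (hasDerivAt_id' x))
  exact this.congr_deriv (by simp only [Pi.sub_apply, Pi.mul_apply]; ring)

theorem cubic_deriv_nonpos_of_one_le {a x : ℝ} (ha : a ≤ 1) (hx : 1 ≤ x) :
    -3 * x ^ 2 + 2 * (1 + a) * x - a ≤ 0 := by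
  nlinarith [mul_nonneg (by linarith : 0 ≤ 3 * x - 1) (by linarith : 0 ≤ x - 1),
    mul_nonneg (by linarith : 0 ≤ 1 - a) (by linarith : 0 ≤ 2 * x - 1)]

theorem cubic_deriv_nonpos_of_nonpos {a x : ℝ} (ha : 0 ≤ a) (hx : x ≤ 0) :
    -3 * x ^ 2 + 2 * (1 + a) * x - a ≤ 0 := by
  nlinarith [mul_nonpos_of_nonneg_of_nonpos (by linarith : 0 ≤ 1 + a) hx, sq_nonneg x]

theorem mul_sq_lt_one_of_lt_one_div_sqrt {τ c : ℝ} (hc : 0 < c) (h : c < 1 / √τ) :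
    τ * c ^ 2 < 1 := by
  have hs : 0 < √τ := one_div_pos.1 (hc.trans h)
  have hcs : c * √τ < 1 := (lt_div_iff₀ hs).1 h
  calc τ * c ^ 2 = (c * √τ) ^ 2 := by rw [mul_pow, Real.sq_sqrt (Real.sqrt_pos.1 hs).le, mul_comm]
    _ < 1 := pow_lt_one₀ (by positivity) hcs two_ne_zero

theorem E_plus_minus_positively_invariant_general
    (a τ γ ε c β δ : ℝ) (ha0 : 0 < a) (ha1 : a < 1)
    (hε : 0 < ε)
    (hc0 : 0 < c) (hc1 : c < 1 / Real.sqrt τ)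
    (hβ : β = 1 / (1 - τ * c ^ 2)) (hδ : δ = ε / c)
    (T : ℝ) (v u w : ℝ → ℝ)
    (hsol : ∀ ξ ∈ Set.Ico (0 : ℝ) T,
      HasDerivWithinAt v (u ξ) (Set.Ico (0 : ℝ) T) ξ ∧
      HasDerivWithinAt u (β * (c * u ξ - v ξ * (v ξ - a) * (1 - v ξ) + w ξ))
        (Set.Ico (0 : ℝ) T) ξ ∧
      HasDerivWithinAt w (δ * (v ξ - γ * w ξ)) (Set.Ico (0 : ℝ) T) ξ) :
    ((0 < u 0 ∧ 1 < v 0 ∧ 0 < δ * (v 0 - γ * w 0) ∧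
        0 < β * (c * u 0 - v 0 * (v 0 - a) * (1 - v 0) + w 0)) →
      ∀ ξ ∈ Set.Ico (0 : ℝ) T,
        0 < u ξ ∧ 1 < v ξ ∧ 0 < δ * (v ξ - γ * w ξ) ∧
          0 < β * (c * u ξ - v ξ * (v ξ - a) * (1 - v ξ) + w ξ)) ∧
    ((v 0 < 0 ∧ u 0 < 0 ∧ δ * (v 0 - γ * w 0) < 0 ∧
        β * (c * u 0 - v 0 * (v 0 - a) * (1 - v 0) + w 0) < 0) →
      ∀ ξ ∈ Set.Ico (0 : ℝ) T,
        v ξ < 0 ∧ u ξ < 0 ∧ δ * (v ξ - γ * w ξ) < 0 ∧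
          β * (c * u ξ - v ξ * (v ξ - a) * (1 - v ξ) + w ξ) < 0) := by
  have hβ0 : 0 < β := hβ ▸ one_div_pos.2 (sub_pos.2 (mul_sq_lt_one_of_lt_one_div_sqrt hc0 hc1))
  have hδ0 : 0 < δ := hδ ▸ div_pos hε hc0
  have hsol' : IsTravelingWaveSolutionOn (fun x => x * (x - a) * (1 - x)) c β δ γ T v u w := hsol
  constructor
  · rintro ⟨hu, hv, hA, hB⟩ ξ hξ
    obtain ⟨hu, hv, hA, hB⟩ := hsol'.inUpperRegion hβ0.le hδ0 (hasDerivAt_cubic a)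
      (fun x hx => cubic_deriv_nonpos_of_one_le ha1.le hx.le)
      ⟨hu, hv, pos_of_mul_pos_right hA hδ0.le, pos_of_mul_pos_right hB hβ0.le⟩ ξ hξ
    exact ⟨hu, hv, mul_pos hδ0 hA, mul_pos hβ0 hB⟩
  · rintro ⟨hv, hu, hA, hB⟩ ξ hξ
    obtain ⟨hu, hv, hA, hB⟩ := hsol'.inLowerRegion hβ0.le hδ0 (hasDerivAt_cubic a)
      (fun x hx => cubic_deriv_nonpos_of_nonpos ha0.le hx.le)
      ⟨hu, hv, neg_of_mul_neg_right hA hδ0.le, neg_of_mul_neg_right hB hβ0.le⟩ ξ hξ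
    exact ⟨hv, hu, mul_neg_of_pos_of_neg hδ0 hA, mul_neg_of_pos_of_neg hβ0 hB⟩

theorem E_plus_minus_positively_invariant
    (a τ γ ε c β δ : ℝ) (ha0 : 0 < a) (ha1 : a < 1)
    (hτ : 0 < τ) (hγ : 0 < γ) (hε : 0 < ε)
    (hc0 : 0 < c) (hc1 : c < 1 / Real.sqrt τ)
    (hβ : β = 1 / (1 - τ * c ^ 2)) (hδ : δ = ε / c)
    (T : ℝ) (hT : 0 < T) (v u w : ℝ → ℝ)
    (hsol : ∀ ξ ∈ Set.Ico (0 : ℝ) T,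
      HasDerivWithinAt v (u ξ) (Set.Ico (0 : ℝ) T) ξ ∧
      HasDerivWithinAt u (β * (c * u ξ - v ξ * (v ξ - a) * (1 - v ξ) + w ξ))
        (Set.Ico (0 : ℝ) T) ξ ∧
      HasDerivWithinAt w (δ * (v ξ - γ * w ξ)) (Set.Ico (0 : ℝ) T) ξ) :
    ((0 < u 0 ∧ 1 < v 0 ∧ 0 < δ * (v 0 - γ * w 0) ∧
        0 < β * (c * u 0 - v 0 * (v 0 - a) * (1 - v 0) + w 0)) →
      ∀ ξ ∈ Set.Ico (0 : ℝ) T,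
        0 < u ξ ∧ 1 < v ξ ∧ 0 < δ * (v ξ - γ * w ξ) ∧
          0 < β * (c * u ξ - v ξ * (v ξ - a) * (1 - v ξ) + w ξ)) ∧
    ((v 0 < 0 ∧ u 0 < 0 ∧ δ * (v 0 - γ * w 0) < 0 ∧
        β * (c * u 0 - v 0 * (v 0 - a) * (1 - v 0) + w 0) < 0) →
      ∀ ξ ∈ Set.Ico (0 : ℝ) T,
        v ξ < 0 ∧ u ξ < 0 ∧ δ * (v ξ - γ * w ξ) < 0 ∧
          β * (c * u ξ - v ξ * (v ξ - a) * (1 - v ξ) + w ξ) < 0) :=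
  E_plus_minus_positively_invariant_general a τ γ ε c β δ ha0 ha1 hε hc0 hc1 hβ hδ T v u w hsol
end

section
/- Let 0 < a < 1, τ, γ, ε > 0 with 1/γ > (1 − a)²/4, 0 < c < 1/√τ, β = 1/(1 − τc²), δ = ε/c, and f(v) = v(v − a)(1 − v). Suppose the parameters satisfy β(1 − a)²/4 < ε/c² < β/γ. Then every solution q = (v, u, w) of the system v' = u, u' = β(cu − f(v) + w), w' = δ(v − γw) that is defined and bounded on all of ℝ is the constant zero solution. -/
/-!
Along a solution, the Lyapunov function `G = p u v - u² + 2β F(v) + 2β v w - (pβc/2) v² + t w²`,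
with `F' = -f`, has derivative
`(p - 2βc) u² + β (2δ - p (v - a)(1 - v)) v² + βγ (p - 2δγ) w²`
once `t` is chosen to cancel the `v w` terms. Since `(v - a)(1 - v) ≤ (1 - a)²/4`, the
parameter conditions leave room for a `p` making all three coefficients positive, so
`G' ≥ κ |q|²`. On a bounded solution also `|G| ≤ C |q|²`, hence `G' ≥ (κ/C) |G|`: a bounded
function with this property vanishes, since a positive value would make it grow at least
linearly to the right, and a negative one to the left. Then `G' = 0` forces `q = 0`.
-/

theorem nonpos_of_mul_abs_le_deriv {g g' : ℝ → ℝ} {r B : ℝ} (hr : 0 < r)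
    (hg : ∀ x, HasDerivAt g (g' x) x) (hle : ∀ x, r * |g x| ≤ g' x) (hB : ∀ x, g x ≤ B)
    (x : ℝ) : g x ≤ 0 := by
  by_contra! hx
  have hmono : Monotone g :=
    monotone_of_hasDerivAt_nonneg hg fun y => (mul_nonneg hr.le (abs_nonneg _)).trans (hle y)
  have hgrowth : ∀ y, x ≤ y → r * g x * (y - x) ≤ g y - g x := by
    refine fun y hy => (convex_Ici x).mul_sub_le_image_sub_of_le_deriv
      (fun z _ => (hg z).continuousAt.continuousWithinAt)
      (fun z _ => (hg z).differentiableAt.differentiableWithinAt) ?_ x Set.self_mem_Ici y hy hy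
    rw [interior_Ici]
    intro z hz
    rw [(hg z).deriv]
    calc r * g x ≤ r * |g z| := by
          gcongr; exact (hmono (le_of_lt hz)).trans (le_abs_self _)
      _ ≤ g' z := hle z
  -- at distance `T` to the right of `x`, linear growth carries `g` past `B`
  set T := (B - g x) / (r * g x) + 1
  have hrx : 0 < r * g x := mul_pos hr hx
  have hT : r * g x * T = B - g x + r * g x := by
    simp only [T]; field_simp
  have h := hgrowth (x + T) (by
    have : 0 ≤ (B - g x) / (r * g x) := div_nonneg (by linarith [hB x]) hrx.le
    simp only [T]; linarith)
  rw [add_sub_cancel_left, hT] at h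
  linarith [hB (x + T)]

theorem eq_zero_of_mul_abs_le_deriv {g g' : ℝ → ℝ} {r B : ℝ} (hr : 0 < r)
    (hg : ∀ x, HasDerivAt g (g' x) x) (hle : ∀ x, r * |g x| ≤ g' x) (hB : ∀ x, |g x| ≤ B)
    (x : ℝ) : g x = 0 := by
  have hreflect : ∀ y, HasDerivAt (fun y => -g (-y)) (g' (-y)) y := fun y => by
    have h := ((hg (-y)).comp y (hasDerivAt_neg y)).neg
    rwa [mul_neg_one, neg_neg] at h
  have hnonpos : g x ≤ 0 :=
    nonpos_of_mul_abs_le_deriv hr hg hle (fun y => (le_abs_self _).trans (hB y)) x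
  have hnonneg : -g (-(-x)) ≤ 0 :=
    nonpos_of_mul_abs_le_deriv hr hreflect (fun y => by simpa using hle (-y))
      (fun y => (neg_le_abs _).trans (hB (-y))) (-x)
  rw [neg_neg] at hnonneg
  linarith

theorem abs_mul_le_sq_add_sq (x y : ℝ) : |x * y| ≤ x ^ 2 + y ^ 2 :=
  abs_le.mpr ⟨by nlinarith [sq_nonneg (x + y)], by nlinarith [sq_nonneg (x - y)]⟩

theorem abs_quadratic_form_le {A B E H T K : ℝ} (hE : |E| ≤ K) (v u w : ℝ) :
    |A * u * v + B * u ^ 2 + E * v ^ 2 + H * v * w + T * w ^ 2|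
      ≤ (|A| + |B| + K + |H| + |T|) * (v ^ 2 + u ^ 2 + w ^ 2) := by
  set Q := v ^ 2 + u ^ 2 + w ^ 2
  have hv : v ^ 2 ≤ Q := by linarith [sq_nonneg u, sq_nonneg w]
  have hu : u ^ 2 ≤ Q := by linarith [sq_nonneg v, sq_nonneg w]
  have hw : w ^ 2 ≤ Q := by linarith [sq_nonneg v, sq_nonneg u]
  have huv : |u * v| ≤ Q := (abs_mul_le_sq_add_sq u v).trans (by linarith [sq_nonneg w])
  have hvw : |v * w| ≤ Q := (abs_mul_le_sq_add_sq v w).trans (by linarith [sq_nonneg u])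
  have h1 : |A * u * v| ≤ |A| * Q := by rw [mul_assoc, abs_mul]; gcongr
  have h2 : |B * u ^ 2| ≤ |B| * Q := by rw [abs_mul, abs_sq]; gcongr
  have h3 : |E * v ^ 2| ≤ K * Q := by
    rw [abs_mul, abs_sq]; exact mul_le_mul hE hv (sq_nonneg v) ((abs_nonneg E).trans hE)
  have h4 : |H * v * w| ≤ |H| * Q := by rw [mul_assoc, abs_mul]; gcongr
  have h5 : |T * w ^ 2| ≤ |T| * Q := by rw [abs_mul, abs_sq]; gcongr
  rw [abs_le]
  constructor <;> linarith [abs_le.mp h1, abs_le.mp h2, abs_le.mp h3, abs_le.mp h4, abs_le.mp h5]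

theorem eq_zero_of_mul_le_deriv_of_abs_le_mul {g g' Q : ℝ → ℝ} {κ C B : ℝ} (hκ : 0 < κ)
    (hC : 0 < C) (hg : ∀ x, HasDerivAt g (g' x) x) (hg' : ∀ x, κ * Q x ≤ g' x)
    (hgQ : ∀ x, |g x| ≤ C * Q x) (hQ : ∀ x, Q x ≤ B) (x : ℝ) : Q x = 0 := by
  have hg0 : g = fun _ => 0 := funext <| eq_zero_of_mul_abs_le_deriv (div_pos hκ hC) hg
    (fun y => calc κ / C * |g y| ≤ κ / C * (C * Q y) := by gcongr; exact hgQ y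
      _ = κ * Q y := by field_simp
      _ ≤ g' y := hg' y)
    (fun y => (hgQ y).trans (mul_le_mul_of_nonneg_left (hQ y) hC.le))
  have hg'0 : g' x = 0 := (hg x).unique (hg0 ▸ hasDerivAt_const x 0)
  have hQ0 : 0 ≤ Q x := nonneg_of_mul_nonneg_right ((abs_nonneg _).trans (hgQ x)) hC
  nlinarith [hg' x]

theorem sq_add_sq_add_sq_eq_zero {x y z : ℝ} (h : x ^ 2 + y ^ 2 + z ^ 2 = 0) :
    x = 0 ∧ y = 0 ∧ z = 0 := by
  refine ⟨?_, ?_, ?_⟩ <;> refine pow_eq_zero_iff two_ne_zero |>.mp ?_ <;>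
    nlinarith [sq_nonneg x, sq_nonneg y, sq_nonneg z]

theorem one_sub_mul_sq_pos {τ c : ℝ} (hτ : 0 < τ) (hc₀ : 0 ≤ c) (hc : c < 1 / √τ) :
    0 < 1 - τ * c ^ 2 := by
  have hcτ : c * √τ < 1 := (lt_div_iff₀ (Real.sqrt_pos.mpr hτ)).mp hc
  have : τ * c ^ 2 = (c * √τ) ^ 2 := by rw [mul_pow, Real.sq_sqrt hτ.le]; ring
  nlinarith [mul_nonneg hc₀ (Real.sqrt_nonneg τ)]

theorem sub_mul_one_sub_le (a v : ℝ) : (v - a) * (1 - v) ≤ (1 - a) ^ 2 / 4 := by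
  nlinarith [sq_nonneg (v - (1 + a) / 2)]

namespace TravelingWave

variable (a β c δ γ p : ℝ)

noncomputable def lyapunov (v u w : ℝ) : ℝ :=
  p * u * v - u ^ 2 + 2 * β * (v ^ 4 / 4 - (1 + a) * v ^ 3 / 3 + a * v ^ 2 / 2)
    + 2 * β * v * w - p * β * c / 2 * v ^ 2 - β * (p - 2 * δ * γ) / (2 * δ) * w ^ 2

def lyapunovDeriv (v u w : ℝ) : ℝ :=
  (p - 2 * β * c) * u ^ 2 + β * (2 * δ - p * ((v - a) * (1 - v))) * v ^ 2
    + β * γ * (p - 2 * δ * γ) * w ^ 2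

variable {a β c δ γ p}

theorem hasDerivAt_lyapunov (hδ : δ ≠ 0) {v u w : ℝ → ℝ} {s : ℝ}
    (hv : HasDerivAt v (u s) s)
    (hu : HasDerivAt u (β * (c * u s - v s * (v s - a) * (1 - v s) + w s)) s)
    (hw : HasDerivAt w (δ * (v s - γ * w s)) s) :
    HasDerivAt (fun s => lyapunov a β c δ γ p (v s) (u s) (w s))
      (lyapunovDeriv a β c δ γ p (v s) (u s) (w s)) s := by
  have h := (((((((hu.const_mul p).mul hv).sub (hu.pow 2)).add
      (((((hv.pow 4).div_const 4).sub (((hv.pow 3).const_mul (1 + a)).div_const 3)).add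
        (((hv.pow 2).const_mul a).div_const 2)).const_mul (2 * β))).add
      ((hv.const_mul (2 * β)).mul hw)).sub ((hv.pow 2).const_mul (p * β * c / 2))).sub
      ((hw.pow 2).const_mul (β * (p - 2 * δ * γ) / (2 * δ))))
  refine h.congr_deriv ?_
  simp only [lyapunovDeriv]
  field_simp
  ring

theorem exists_mul_normSq_le_lyapunovDeriv (hβ : 0 < β) (hc : 0 ≤ c) (hγ : 0 < γ)
    (hp₁ : 2 * β * c < p) (hp₂ : p * ((1 - a) ^ 2 / 4) < 2 * δ) (hp₃ : 2 * δ * γ < p) :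
    ∃ κ > 0, ∀ v u w, κ * (v ^ 2 + u ^ 2 + w ^ 2) ≤ lyapunovDeriv a β c δ γ p v u w := by
  set κu := p - 2 * β * c
  set κv := β * (2 * δ - p * ((1 - a) ^ 2 / 4))
  set κw := β * γ * (p - 2 * δ * γ)
  set κ := min κu (min κv κw)
  have hκ : 0 < κ :=
    lt_min (by linarith) (lt_min (mul_pos hβ (by linarith)) (mul_pos (mul_pos hβ hγ) (by linarith)))
  have hκu : κ ≤ κu := min_le_left _ _
  have hκv : κ ≤ κv := (min_le_right _ _).trans (min_le_left _ _)
  have hκw : κ ≤ κw := (min_le_right _ _).trans (min_le_right _ _)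
  refine ⟨κ, hκ, fun v u w => ?_⟩
  have hp : 0 ≤ p := by nlinarith [mul_nonneg hβ.le hc]
  have hκv_le : κv ≤ β * (2 * δ - p * ((v - a) * (1 - v))) := by
    simp only [κv]; gcongr; exact sub_mul_one_sub_le a v
  calc κ * (v ^ 2 + u ^ 2 + w ^ 2) = κ * u ^ 2 + κ * v ^ 2 + κ * w ^ 2 := by ring
    _ ≤ κu * u ^ 2 + β * (2 * δ - p * ((v - a) * (1 - v))) * v ^ 2 + κw * w ^ 2 := by
        gcongr; exact hκv.trans hκv_le
    _ = lyapunovDeriv a β c δ γ p v u w := rfl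

variable (a β c δ γ p) in
theorem exists_abs_lyapunov_le (M : ℝ) :
    ∃ C > 0, ∀ v u w, |v| ≤ M → |lyapunov a β c δ γ p v u w| ≤ C * (v ^ 2 + u ^ 2 + w ^ 2) := by
  -- `f` is the coefficient of `v ^ 2` in `lyapunov` once the quartic and cubic terms are absorbed
  obtain ⟨K, hK⟩ := (isCompact_Icc (a := -M) (b := M)).exists_bound_of_continuousOn
    (f := fun v : ℝ => β * (v ^ 2 / 2 - 2 * (1 + a) * v / 3 + a) - p * β * c / 2)
    (by fun_prop)
  refine ⟨|p| + |(-1 : ℝ)| + |K| + |2 * β| + |-(β * (p - 2 * δ * γ) / (2 * δ))|, by positivity,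
    fun v u w hv => ?_⟩
  have hE := (hK v (abs_le.mp hv)).trans (le_abs_self K)
  convert abs_quadratic_form_le hE v u w using 2
  simp only [lyapunov]
  ring

theorem exists_lyapunov_weight {N : ℝ} (hN : 0 < N) (hA : β * c * N < δ) (hB : δ * γ < β * c) :
    ∃ p, 2 * β * c < p ∧ p * N < 2 * δ ∧ 2 * δ * γ < p := by
  have hA' : β * c < δ / N := (lt_div_iff₀ hN).mpr hA
  refine ⟨β * c + δ / N, by linarith, ?_, by linarith⟩
  rw [add_mul, div_mul_cancel₀ δ hN.ne']
  linarith

end TravelingWave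

open TravelingWave in
theorem only_trivial_bounded_solution_general
    (a τ γ ε c β δ : ℝ) (ha1 : a < 1)
    (hτ : 0 < τ) (hγ : 0 < γ)
    (hc0 : 0 < c) (hc1 : c < 1 / Real.sqrt τ)
    (hβ : β = 1 / (1 - τ * c ^ 2)) (hδ : δ = ε / c)
    (hΦ1 : β * (1 - a) ^ 2 / 4 < ε / c ^ 2) (hΦ2 : ε / c ^ 2 < β / γ)
    (v u w : ℝ → ℝ)
    (hsol : ∀ ξ : ℝ,
      HasDerivAt v (u ξ) ξ ∧
      HasDerivAt u (β * (c * u ξ - v ξ * (v ξ - a) * (1 - v ξ) + w ξ)) ξ ∧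
      HasDerivAt w (δ * (v ξ - γ * w ξ)) ξ)
    (hbdd : ∃ M : ℝ, ∀ ξ : ℝ, |v ξ| ≤ M ∧ |u ξ| ≤ M ∧ |w ξ| ≤ M) :
    ∀ ξ : ℝ, v ξ = 0 ∧ u ξ = 0 ∧ w ξ = 0 := by
  obtain ⟨M, hM⟩ := hbdd
  have hβ0 : 0 < β := hβ ▸ one_div_pos.mpr (one_sub_mul_sq_pos hτ hc0.le hc1)
  have hN : 0 < (1 - a) ^ 2 / 4 := by have := sub_ne_zero.mpr ha1.ne'; positivity
  have hA : β * c * ((1 - a) ^ 2 / 4) < δ := by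
    rw [hδ, lt_div_iff₀ hc0]
    linear_combination (lt_div_iff₀ (by positivity)).mp hΦ1
  have hB : δ * γ < β * c := by
    rw [hδ, div_mul_eq_mul_div, div_lt_iff₀ hc0]
    linear_combination (div_lt_div_iff₀ (by positivity) hγ).mp hΦ2
  have hδ0 : δ ≠ 0 := ((by positivity : 0 < β * c * ((1 - a) ^ 2 / 4)).trans hA).ne'
  obtain ⟨p, hp₁, hp₂, hp₃⟩ := exists_lyapunov_weight hN hA hB
  obtain ⟨κ, hκ, hD⟩ := exists_mul_normSq_le_lyapunovDeriv hβ0 hc0.le hγ hp₁ hp₂ hp₃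
  obtain ⟨C, hC, hG⟩ := exists_abs_lyapunov_le a β c δ γ p M
  have hsq : ∀ x : ℝ, |x| ≤ M → x ^ 2 ≤ M ^ 2 := fun x hx => sq_le_sq.mpr (hx.trans (le_abs_self M))
  have hnormSq : ∀ ξ, v ξ ^ 2 + u ξ ^ 2 + w ξ ^ 2 = 0 :=
    eq_zero_of_mul_le_deriv_of_abs_le_mul hκ hC
      (fun ξ => hasDerivAt_lyapunov hδ0 (hsol ξ).1 (hsol ξ).2.1 (hsol ξ).2.2)
      (fun ξ => hD _ _ _) (fun ξ => hG _ _ _ (hM ξ).1) (B := 3 * M ^ 2)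
      fun ξ => by linarith [hsq _ (hM ξ).1, hsq _ (hM ξ).2.1, hsq _ (hM ξ).2.2]
  exact fun ξ => sq_add_sq_add_sq_eq_zero (hnormSq ξ)

theorem only_trivial_bounded_solution
    (a τ γ ε c β δ : ℝ) (ha0 : 0 < a) (ha1 : a < 1)
    (hτ : 0 < τ) (hγ : 0 < γ) (hε : 0 < ε) (hγN : 1 / γ > (1 - a) ^ 2 / 4)
    (hc0 : 0 < c) (hc1 : c < 1 / Real.sqrt τ)
    (hβ : β = 1 / (1 - τ * c ^ 2)) (hδ : δ = ε / c)
    (hΦ1 : β * (1 - a) ^ 2 / 4 < ε / c ^ 2) (hΦ2 : ε / c ^ 2 < β / γ)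
    (v u w : ℝ → ℝ)
    (hsol : ∀ ξ : ℝ,
      HasDerivAt v (u ξ) ξ ∧
      HasDerivAt u (β * (c * u ξ - v ξ * (v ξ - a) * (1 - v ξ) + w ξ)) ξ ∧
      HasDerivAt w (δ * (v ξ - γ * w ξ)) ξ)
    (hbdd : ∃ M : ℝ, ∀ ξ : ℝ, |v ξ| ≤ M ∧ |u ξ| ≤ M ∧ |w ξ| ≤ M) :
    ∀ ξ : ℝ, v ξ = 0 ∧ u ξ = 0 ∧ w ξ = 0 :=
  only_trivial_bounded_solution_general a τ γ ε c β δ ha1 hτ hγ hc0 hc1 hβ hδ hΦ1 hΦ2 v u w hsol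
    hbdd
end

section
/- Let 0 < a < 1, τ, γ, ε > 0, 0 < c < 1/√τ, β = 1/(1 − τc²), δ = ε/c, and f(v) = v(v − a)(1 − v). Define G(v, u, w) = u² + 2β∫₀ᵛ f(z) dz + (cβ)² v² + β²(c²/ε − γ/β) w² − 2βv(w + cu). Then along every solution q = (v, u, w) of the system v' = u, u' = β(cu − f(v) + w), w' = δ(v − γw), one has, for every ξ in the interval of definition, d/dξ G(q(ξ)) = −2βc ((ε/c²) v(ξ)² − β v(ξ) f(v(ξ))) − 2γδβ² (c²/ε − γ/β) w(ξ)². -/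
/-! Differentiating `G` along a solution, every term containing `u` cancels: `2β u f(v)` from the
potential against `-2β u f(v)` from `2 u u'`, and the `u w`, `u²` and `v u` terms against those of
`-2βv(w + cu)`. The coefficient `β²(c²/ε − γ/β)` of `w²` is chosen so that, with `δ = ε/c`, the
mixed `v w` terms cancel as well, leaving only `v²`, `v f(v)` and `w²`. The identity holds for
all `f`; the cubic only enters through continuity, which makes `∫₀ᵛ f` a primitive. -/

noncomputable def lyapunovG (f : ℝ → ℝ) (β c γ ε v u w : ℝ) : ℝ :=
  u ^ 2 + 2 * β * (∫ z in (0 : ℝ)..v, f z) + (c * β) ^ 2 * v ^ 2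
    + β ^ 2 * (c ^ 2 / ε - γ / β) * w ^ 2 - 2 * β * v * (w + c * u)

theorem HasDerivAt.intervalIntegral_comp {f : ℝ → ℝ} (hf : Continuous f) (a : ℝ) {v : ℝ → ℝ}
    {v' x : ℝ} (hv : HasDerivAt v v' x) :
    HasDerivAt (fun t => ∫ z in a..v t, f z) (f (v x) * v') x :=
  (hf.integral_hasStrictDerivAt a (v x)).hasDerivAt.comp x hv

theorem hasDerivAt_lyapunovG {f : ℝ → ℝ} (hf : Continuous f) {β c γ ε δ : ℝ} (hε : ε ≠ 0)
    (hδ : δ = ε / c) {v u w : ℝ → ℝ} {ξ : ℝ} (hv : HasDerivAt v (u ξ) ξ)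
    (hu : HasDerivAt u (β * (c * u ξ - f (v ξ) + w ξ)) ξ)
    (hw : HasDerivAt w (δ * (v ξ - γ * w ξ)) ξ) :
    HasDerivAt (fun t => lyapunovG f β c γ ε (v t) (u t) (w t))
      (-2 * β * c * (ε / c ^ 2 * v ξ ^ 2 - β * (v ξ * f (v ξ)))
        - 2 * γ * δ * β ^ 2 * (c ^ 2 / ε - γ / β) * w ξ ^ 2) ξ := by
  refine (((((hu.pow 2).add ((hv.intervalIntegral_comp hf 0).const_mul (2 * β))).add
    ((hv.pow 2).const_mul ((c * β) ^ 2))).add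
    ((hw.pow 2).const_mul (β ^ 2 * (c ^ 2 / ε - γ / β)))).sub
    ((hv.const_mul (2 * β)).mul (hw.add (hu.const_mul c)))).congr_deriv ?_
  subst hδ
  -- At `c = 0` or `β = 0` both identities still hold, through `x / 0 = 0`.
  have hcoeff : β ^ 2 * (c ^ 2 / ε - γ / β) * (ε / c) = β ^ 2 * c - β * γ * (ε / c) := by
    rcases eq_or_ne c 0 with rfl | hc
    · simp
    rcases eq_or_ne β 0 with rfl | hβ
    · simp
    field_simp
  have hdiv : c * (ε / c ^ 2) = ε / c := by
    rcases eq_or_ne c 0 with rfl | hc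
    · simp
    field_simp
  simp only [Pi.add_apply]
  push_cast
  linear_combination (2 * v ξ * w ξ) * hcoeff + 2 * β * v ξ ^ 2 * hdiv

theorem lyapunov_derivative_formula_general
    (a γ ε c β δ : ℝ)
    (hε : 0 < ε)
    (hδ : δ = ε / c)
    (s : Set ℝ) (v u w : ℝ → ℝ)
    (hsol : ∀ ξ ∈ s,
      HasDerivAt v (u ξ) ξ ∧
      HasDerivAt u (β * (c * u ξ - v ξ * (v ξ - a) * (1 - v ξ) + w ξ)) ξ ∧
      HasDerivAt w (δ * (v ξ - γ * w ξ)) ξ) :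
    ∀ ξ ∈ s,
      HasDerivAt
        (fun t : ℝ =>
          u t ^ 2 + 2 * β * (∫ z in (0 : ℝ)..(v t), z * (z - a) * (1 - z))
            + (c * β) ^ 2 * v t ^ 2
            + β ^ 2 * (c ^ 2 / ε - γ / β) * w t ^ 2
            - 2 * β * v t * (w t + c * u t))
        (-2 * β * c * (ε / c ^ 2 * v ξ ^ 2
            - β * (v ξ * (v ξ * (v ξ - a) * (1 - v ξ))))
          - 2 * γ * δ * β ^ 2 * (c ^ 2 / ε - γ / β) * w ξ ^ 2) ξ := by
  intro ξ hξ
  obtain ⟨hv, hu, hw⟩ := hsol ξ hξ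
  exact hasDerivAt_lyapunovG (f := fun z => z * (z - a) * (1 - z)) (by fun_prop) hε.ne' hδ hv hu hw

theorem lyapunov_derivative_formula
    (a τ γ ε c β δ : ℝ) (ha0 : 0 < a) (ha1 : a < 1)
    (hτ : 0 < τ) (hγ : 0 < γ) (hε : 0 < ε)
    (hc0 : 0 < c) (hc1 : c < 1 / Real.sqrt τ)
    (hβ : β = 1 / (1 - τ * c ^ 2)) (hδ : δ = ε / c)
    (s : Set ℝ) (hs : IsOpen s) (v u w : ℝ → ℝ)
    (hsol : ∀ ξ ∈ s,
      HasDerivAt v (u ξ) ξ ∧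
      HasDerivAt u (β * (c * u ξ - v ξ * (v ξ - a) * (1 - v ξ) + w ξ)) ξ ∧
      HasDerivAt w (δ * (v ξ - γ * w ξ)) ξ) :
    ∀ ξ ∈ s,
      HasDerivAt
        (fun t : ℝ =>
          u t ^ 2 + 2 * β * (∫ z in (0 : ℝ)..(v t), z * (z - a) * (1 - z))
            + (c * β) ^ 2 * v t ^ 2
            + β ^ 2 * (c ^ 2 / ε - γ / β) * w t ^ 2
            - 2 * β * v t * (w t + c * u t))
        (-2 * β * c * (ε / c ^ 2 * v ξ ^ 2
            - β * (v ξ * (v ξ * (v ξ - a) * (1 - v ξ))))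
          - 2 * γ * δ * β ^ 2 * (c ^ 2 / ε - γ / β) * w ξ ^ 2) ξ :=
  lyapunov_derivative_formula_general a γ ε c β δ hε hδ s v u w hsol
end
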